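/- arXiv:math/0408435 — 8 statements merged into one kernel-verified Lean document; each statement's English description precedes it below -/
import Mathlib

section
/- Let n ≥ 1 and let X be a Hermitian matrix in Mat_n(ℂ) with trace zero. Suppose P ∈ Mat_n(ℂ) is an orthogonal projection (P = P* = P²) with trace(P) = 1 and PX = XP. Then there exist Hermitian matrices A, B ∈ Mat_n(ℂ) such that: AB = BA; X = A − B; there is a unitary matrix U ∈ Mat_n(ℂ) with B = U A U*; max(‖A‖, ‖B‖) ≤ ‖X‖; and AP = PA = 0. -/
namespace ASCaux

open Finset

/-- Greedy rearrangement: keep partial sums bounded. -/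
lemma greedy (M : ℝ) : ∀ (m : ℕ) (g : Fin m → ℝ) (c : ℝ), (∀ i, |g i| ≤ M) → |c| ≤ M →
    |c + ∑ i, g i| ≤ M →
    ∃ e : Equiv.Perm (Fin m), ∀ j : ℕ,
      |c + ∑ i : Fin m, if (i : ℕ) < j then g (e i) else 0| ≤ M := by
  intro m
  induction m with
  | zero =>
    intro g c _ hc _
    exact ⟨1, fun j => by simpa using hc⟩
  | succ m ih =>
    intro g c hg hc htot
    have step : ∀ i₀ : Fin (m+1), |c + g i₀| ≤ M → ∃ e : Equiv.Perm (Fin (m+1)), ∀ j : ℕ,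
        |c + ∑ i : Fin (m+1), if (i:ℕ) < j then g (e i) else 0| ≤ M := by
      intro i₀ hci
      set g' : Fin m → ℝ := fun i => g (Equiv.swap 0 i₀ i.succ) with hg'def
      have hsum' : (c + g i₀) + ∑ i, g' i = c + ∑ i, g i := by
        have h1 : ∑ i : Fin (m+1), g (Equiv.swap 0 i₀ i) = ∑ i, g i :=
          Equiv.sum_comp _ g
        rw [Fin.sum_univ_succ (fun i => g (Equiv.swap 0 i₀ i))] at h1
        simp only [Equiv.swap_apply_left] at h1
        have : ∑ i : Fin m, g' i = (∑ i, g i) - g i₀ := by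
          rw [hg'def]; linarith
        rw [this]; ring
      obtain ⟨e', he'⟩ := ih g' (c + g i₀) (fun i => hg _) hci (by rw [hsum']; exact htot)
      refine ⟨Equiv.Perm.decomposeFin.symm (i₀, e'), fun j => ?_⟩
      cases j with
      | zero => simpa using hc
      | succ jj =>
        rw [Fin.sum_univ_succ]
        simp only [Equiv.Perm.decomposeFin_symm_apply_zero,
          Equiv.Perm.decomposeFin_symm_apply_succ, Fin.val_zero, Fin.val_succ]
        have h := he' jj
        have hcond : (0 : ℕ) < jj + 1 := Nat.succ_pos jj
        rw [if_pos hcond]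
        have hif : ∀ i : Fin m, (if (i:ℕ) + 1 < jj + 1 then g (Equiv.swap 0 i₀ (e' i).succ) else 0)
            = (if (i:ℕ) < jj then g' (e' i) else 0) := by
          intro i
          simp only [Nat.add_lt_add_iff_right, hg'def]
        simp only [hif]
        calc |c + (g i₀ + ∑ i : Fin m, if (i:ℕ) < jj then g' (e' i) else 0)|
            = |(c + g i₀) + ∑ i : Fin m, if (i:ℕ) < jj then g' (e' i) else 0| := by ring_nf
          _ ≤ M := h
    rcases le_or_gt 0 c with h0 | h0
    · by_cases hex : ∃ i₀, g i₀ ≤ 0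
      · obtain ⟨i₀, hi₀⟩ := hex
        refine step i₀ (abs_le.2 ⟨?_, ?_⟩)
        · have := (abs_le.1 (hg i₀)).1; linarith
        · have := (abs_le.1 hc).2; linarith
      · push_neg at hex
        have hM : 0 ≤ M := le_trans (abs_nonneg c) hc
        refine ⟨Equiv.refl _, fun j => abs_le.2 ⟨?_, ?_⟩⟩
        · have h1 : 0 ≤ ∑ i : Fin (m+1), if (i:ℕ) < j then g ((Equiv.refl (Fin (m+1))) i) else 0 :=
            Finset.sum_nonneg fun i _ => by
              split
              · exact le_of_lt (hex _)
              · exact le_rfl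
          linarith
        · have hle : (∑ i : Fin (m+1), if (i:ℕ) < j then g ((Equiv.refl (Fin (m+1))) i) else 0) ≤ ∑ i, g i := by
            refine Finset.sum_le_sum fun i _ => ?_
            split
            · simp
            · exact le_of_lt (hex i)
          have := (abs_le.1 htot).2; linarith
    · by_cases hex : ∃ i₀, 0 ≤ g i₀
      · obtain ⟨i₀, hi₀⟩ := hex
        refine step i₀ (abs_le.2 ⟨?_, ?_⟩)
        · have := (abs_le.1 hc).1; linarith
        · have := (abs_le.1 (hg i₀)).2; linarith
      · push_neg at hex
        have hM : 0 ≤ M := le_trans (abs_nonneg c) hc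
        refine ⟨Equiv.refl _, fun j => abs_le.2 ⟨?_, ?_⟩⟩
        · have hle : (∑ i, g i) ≤ ∑ i : Fin (m+1), if (i:ℕ) < j then g ((Equiv.refl (Fin (m+1))) i) else 0 := by
            refine Finset.sum_le_sum fun i _ => ?_
            split
            · simp
            · exact le_of_lt (hex i)
          have := (abs_le.1 htot).1; linarith
        · have h1 : (∑ i : Fin (m+1), if (i:ℕ) < j then g ((Equiv.refl (Fin (m+1))) i) else 0) ≤ 0 :=
            Finset.sum_nonpos fun i _ => by
              split
              · exact le_of_lt (hex _)
              · exact le_rfl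
          linarith

/-- Staircase construction: write `d` as `a - a∘σ` with `a` vanishing at `k` and bounded. -/
lemma core (m : ℕ) (d : Fin (m+1) → ℝ) (k : Fin (m+1)) (M : ℝ)
    (hsum : ∑ i, d i = 0) (hbd : ∀ i, |d i| ≤ M) :
    ∃ (a : Fin (m+1) → ℝ) (σ : Equiv.Perm (Fin (m+1))),
      a k = 0 ∧ (∀ i, |a i| ≤ M) ∧ ∀ i, a i - a (σ i) = d i := by
  have hM : 0 ≤ M := le_trans (abs_nonneg _) (hbd k)
  set π₀ : Equiv.Perm (Fin (m+1)) := Equiv.swap (0 : Fin (m+1)) k with hπ₀def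
  set g : Fin (m+1) → ℝ := fun i => d (π₀ i) with hgdef
  have hgsum : ∑ i, g i = 0 := by
    rw [hgdef]
    rw [Equiv.sum_comp π₀ d]
    exact hsum
  have hg0 : g 0 = d k := by simp [hgdef, hπ₀def]
  have htail : ∑ i : Fin m, g i.succ = -d k := by
    have h := Fin.sum_univ_succ g
    rw [hgsum, hg0] at h
    linarith
  obtain ⟨e, he⟩ := greedy M m (fun i => g i.succ) 0 (fun i => hbd _)
      (by simpa using hM) (by rw [zero_add, htail, abs_neg]; exact hbd k)
  set E : Equiv.Perm (Fin (m+1)) := Equiv.Perm.decomposeFin.symm (0, e) with hEdef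
  set π : Equiv.Perm (Fin (m+1)) := π₀ * E with hπdef
  have hπ0 : π 0 = k := by
    simp [hπdef, hEdef, Equiv.Perm.mul_apply, hπ₀def]
  have hgg : ∀ i : Fin m, d (π i.succ) = g ((e i).succ) := by
    intro i
    simp only [hπdef, Equiv.Perm.mul_apply, hEdef,
      Equiv.Perm.decomposeFin_symm_apply_succ, Equiv.swap_self, Equiv.refl_apply]
    rfl
  set a' : Fin (m+1) → ℝ := fun x => ∑ i : Fin m, if (i:ℕ) < (x:ℕ) then g ((e i).succ) else 0
    with ha'def
  have ha'0 : a' 0 = 0 := by simp [ha'def]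
  have hbd' : ∀ x, |a' x| ≤ M := fun x => by simpa using he (x : ℕ)
  have ha'last : a' (Fin.last m) = -d k := by
    rw [ha'def]
    simp only [Fin.val_last]
    rw [Finset.sum_congr rfl (fun i _ => if_pos i.isLt)]
    rw [Equiv.sum_comp e (fun i => g i.succ)]
    exact htail
  have key : ∀ x : Fin (m+1), a' x - a' (x - 1) = d (π x) := by
    intro x
    induction x using Fin.cases with
    | zero =>
      have h01 : (0 : Fin (m+1)) - 1 = Fin.last m := by
        ext
        simp [Fin.sub_def, Fin.val_last]
      rw [h01, ha'0, ha'last, hπ0]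
      ring
    | succ j =>
      have hm : 0 < m := Nat.lt_of_le_of_lt (Nat.zero_le _) j.isLt
      have hsub : (j.succ : Fin (m+1)) - 1 = j.castSucc := by
        ext
        rw [Fin.sub_def]
        simp only [Fin.val_succ, Fin.coe_castSucc, Fin.val_one']
        have h1 : 1 % (m+1) = 1 := Nat.mod_eq_of_lt (by omega)
        rw [h1]
        have h2 : m + 1 - 1 + ((j : ℕ) + 1) = (m+1) + (j : ℕ) := by omega
        rw [h2, Nat.add_mod_left]
        exact Nat.mod_eq_of_lt (by omega)
      rw [hsub, hgg j, ha'def]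
      simp only [Fin.val_succ, Fin.coe_castSucc]
      rw [← Finset.sum_sub_distrib]
      rw [Finset.sum_eq_single j]
      · simp [Nat.lt_succ_iff]
      · intro i _ hij
        have hvne : (i : ℕ) ≠ (j : ℕ) := fun h => hij (Fin.ext h)
        rcases lt_trichotomy (i : ℕ) (j : ℕ) with h | h | h
        · rw [if_pos (Nat.lt_succ_of_lt h), if_pos h, sub_self]
        · exact absurd h hvne
        · rw [if_neg (by omega), if_neg (by omega), sub_self]
      · intro h
        exact absurd (Finset.mem_univ j) h
  refine ⟨fun i => a' (π⁻¹ i), π * (Equiv.subRight (1 : Fin (m+1))) * π⁻¹, ?_, ?_, ?_⟩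
  · show a' (π⁻¹ k) = 0
    have : π⁻¹ k = 0 := by rw [← hπ0, show π⁻¹ (π 0) = 0 from π.symm_apply_apply 0]
    rw [this, ha'0]
  · intro i; exact hbd' _
  · intro i
    show a' (π⁻¹ i) - a' (π⁻¹ ((π * (Equiv.subRight (1 : Fin (m+1))) * π⁻¹) i)) = d i
    have h1 : π⁻¹ ((π * (Equiv.subRight (1 : Fin (m+1))) * π⁻¹) i) = π⁻¹ i - 1 := by
      simp [Equiv.Perm.mul_apply, Equiv.subRight_apply]
    rw [h1]
    have := key (π⁻¹ i)
    rwa [show π (π⁻¹ i) = i from π.apply_symm_apply i] at this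

open scoped Matrix Matrix.Norms.L2Operator

variable {N : Type*} [Fintype N] [DecidableEq N]

/-- permutation matrix -/
def pmat (σ : Equiv.Perm N) : Matrix N N ℂ :=
  Matrix.of fun i j => if σ j = i then 1 else 0

lemma pmat_conjTranspose (σ : Equiv.Perm N) : (pmat σ)ᴴ = pmat σ⁻¹ := by
  ext i j
  simp only [pmat, Matrix.conjTranspose_apply, Matrix.of_apply]
  have : (σ⁻¹ j = i) ↔ (σ i = j) := by
    constructor
    · intro h; rw [← h, show σ (σ⁻¹ j) = j from σ.apply_symm_apply j]
    · intro h; rw [← h, show σ⁻¹ (σ i) = i from σ.symm_apply_apply i]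
  by_cases h : σ i = j
  · rw [if_pos h, if_pos (this.2 h)]; simp
  · rw [if_neg h, if_neg (fun hh => h (this.1 hh))]; simp

lemma pmat_mul (σ τ : Equiv.Perm N) : pmat σ * pmat τ = pmat (σ * τ) := by
  ext i j
  rw [Matrix.mul_apply]
  rw [Finset.sum_eq_single (τ j)]
  · simp [pmat, Equiv.Perm.mul_apply]
    rfl
  · intro b _ hb
    simp only [pmat, Matrix.of_apply]
    rw [if_neg (show ¬ τ j = b from fun h => hb h.symm), mul_zero]
  · intro h; exact absurd (Finset.mem_univ _) h

lemma pmat_one : pmat (1 : Equiv.Perm N) = 1 := by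
  ext i j
  simp [pmat, Matrix.one_apply, eq_comm]

lemma pmat_unitary (σ : Equiv.Perm N) :
    pmat σ * (pmat σ)ᴴ = 1 ∧ (pmat σ)ᴴ * pmat σ = 1 := by
  rw [pmat_conjTranspose, pmat_mul, pmat_mul]
  simp [pmat_one]

lemma pmat_diag (σ : Equiv.Perm N) (v : N → ℂ) :
    pmat σ * Matrix.diagonal v * (pmat σ)ᴴ = Matrix.diagonal (fun i => v (σ⁻¹ i)) := by
  rw [pmat_conjTranspose]
  ext i j
  rw [Matrix.mul_apply]
  have hterm : ∀ b, (pmat σ * Matrix.diagonal v) i b * pmat σ⁻¹ b j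
      = (if σ b = i then v b else 0) * (if σ⁻¹ j = b then 1 else 0) := by
    intro b
    rw [Matrix.mul_diagonal]
    simp only [pmat, Matrix.of_apply, ite_mul, one_mul, zero_mul]
  simp only [hterm]
  rw [Finset.sum_eq_single (σ⁻¹ j)]
  · rw [if_pos rfl, mul_one, show σ (σ⁻¹ j) = j from σ.apply_symm_apply j]
    by_cases h : i = j
    · subst h; simp
    · rw [if_neg (Ne.symm h), Matrix.diagonal_apply_ne _ h]
  · intro b _ hb
    rw [if_neg (show ¬ σ⁻¹ j = b from fun hh => hb hh.symm), mul_zero]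
  · intro h; exact absurd (Finset.mem_univ _) h

lemma diag_submatrix {O : Type*} [Fintype O] [DecidableEq O] (e : O ≃ N) (w : N → ℂ) :
    (Matrix.diagonal w).submatrix e e = Matrix.diagonal (fun i => w (e i)) := by
  ext i j
  by_cases h : i = j
  · subst h; simp
  · rw [Matrix.submatrix_apply, Matrix.diagonal_apply_ne _ (fun hh => h (e.injective hh)),
      Matrix.diagonal_apply_ne _ h]

lemma norm_diagonal_le (v : N → ℝ) (M : ℝ) (hM : 0 ≤ M) (h : ∀ i, |v i| ≤ M) :
    ‖(Matrix.diagonal (fun i => (v i : ℂ)) : Matrix N N ℂ)‖ ≤ M := by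
  rw [Matrix.l2_opNorm_def]
  refine ContinuousLinearMap.opNorm_le_bound _ hM fun x => ?_
  have hx : ∀ y : EuclideanSpace ℂ N, ‖y‖ = Real.sqrt (∑ i, ‖y i‖^2) := fun y =>
    EuclideanSpace.norm_eq y
  rw [hx x]
  have happ : ‖(Matrix.toEuclideanLin ≪≫ₗ LinearMap.toContinuousLinearMap)
      (Matrix.diagonal (fun i => (v i : ℂ))) x‖ = Real.sqrt (∑ i, ‖(v i : ℂ) * x i‖^2) := by
    rw [show ((Matrix.toEuclideanLin ≪≫ₗ LinearMap.toContinuousLinearMap)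
        (Matrix.diagonal (fun i => (v i : ℂ))) x : EuclideanSpace ℂ N)
        = Matrix.toEuclideanLin (Matrix.diagonal (fun i => (v i : ℂ))) x from rfl]
    rw [hx]
    congr 1
    refine Finset.sum_congr rfl fun i _ => ?_
    congr 1
    rw [Matrix.toEuclideanLin_apply]
    exact congrArg norm (Matrix.mulVec_diagonal _ _ i)
  rw [happ]
  rw [show M * Real.sqrt (∑ i, ‖x i‖^2) = Real.sqrt (M^2 * ∑ i, ‖x i‖^2) by
    rw [Real.sqrt_mul (sq_nonneg M), Real.sqrt_sq hM]]
  apply Real.sqrt_le_sqrt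
  rw [Finset.mul_sum]
  refine Finset.sum_le_sum fun i _ => ?_
  rw [norm_mul, Complex.norm_real, Real.norm_eq_abs, mul_pow]
  have h4 : |v i|^2 ≤ M^2 := by nlinarith [h i, abs_nonneg (v i)]
  exact mul_le_mul_of_nonneg_right h4 (sq_nonneg _)

lemma abs_le_norm_diagonal (v : N → ℝ) (i : N) :
    |v i| ≤ ‖(Matrix.diagonal (fun j => (v j : ℂ)) : Matrix N N ℂ)‖ := by
  have h := Matrix.l2_opNorm_mulVec (Matrix.diagonal (fun j => (v j : ℂ)))
    (EuclideanSpace.single i 1)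
  rw [EuclideanSpace.norm_single, norm_one, mul_one] at h
  refine le_trans ?_ h
  have he : ((EuclideanSpace.equiv N ℂ).symm <|
      (Matrix.diagonal (fun j => (v j : ℂ))) *ᵥ (EuclideanSpace.single i 1) : EuclideanSpace ℂ N)
      = EuclideanSpace.single i ((v i : ℂ)) := by
    apply PiLp.ext
    intro j
    have h1 : ((Matrix.diagonal (fun j => (v j : ℂ))) *ᵥ (EuclideanSpace.single i 1)) j
        = (v j : ℂ) * (EuclideanSpace.single i (1:ℂ) j) := Matrix.mulVec_diagonal _ _ j
    have h2 : ((EuclideanSpace.equiv N ℂ).symm <|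
        (Matrix.diagonal (fun j => (v j : ℂ))) *ᵥ (EuclideanSpace.single i 1) : EuclideanSpace ℂ N) j
        = ((Matrix.diagonal (fun j => (v j : ℂ))) *ᵥ (EuclideanSpace.single i 1)) j := rfl
    rw [h2, h1]
    rw [EuclideanSpace.single_apply, EuclideanSpace.single_apply]
    by_cases hji : j = i
    · subst hji; simp
    · simp [hji]
  rw [he, EuclideanSpace.norm_single]
  rw [Complex.norm_real, Real.norm_eq_abs]

lemma mul_one_cancel {A B : Matrix N N ℂ} (h : A * B = 1) (Z : Matrix N N ℂ) :
    A * (B * Z) = Z := by rw [← Matrix.mul_assoc, h, Matrix.one_mul]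

/-- Simultaneous diagonalization of a Hermitian `X` and a commuting rank-one projection `P`. -/
lemma diagonalize (X P : Matrix N N ℂ)
    (hX : X.IsHermitian) (hPstar : Pᴴ = P) (hPidem : P * P = P) (hPtr : P.trace = 1)
    (hPX : P * X = X * P) :
    ∃ (W : Matrix N N ℂ) (k : N) (dd : N → ℝ),
      W * Wᴴ = 1 ∧ Wᴴ * W = 1 ∧
      Wᴴ * X * W = Matrix.diagonal (fun i => (dd i : ℂ)) ∧
      Wᴴ * P * W = Matrix.diagonal (fun i => if i = k then (1:ℂ) else 0) := by
  classical
  have hP : P.IsHermitian := hPstar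
  set U₁ : Matrix N N ℂ := (hP.eigenvectorUnitary : Matrix N N ℂ) with hU₁def
  have hu1 : U₁ * star U₁ = 1 := (Matrix.mem_unitaryGroup_iff).1 hP.eigenvectorUnitary.2
  have hu1' : star U₁ * U₁ = 1 := (Matrix.mem_unitaryGroup_iff').1 hP.eigenvectorUnitary.2
  set ev : N → ℝ := hP.eigenvalues with hevdef
  have hD : star U₁ * P * U₁ = Matrix.diagonal (RCLike.ofReal ∘ ev) :=
    by have h := hP.conjStarAlgAut_star_eigenvectorUnitary; rwa [Unitary.conjStarAlgAut_star_apply] at h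
  -- eigenvalues are 0 or 1
  have hDD : (Matrix.diagonal (RCLike.ofReal ∘ ev) : Matrix N N ℂ) * Matrix.diagonal (RCLike.ofReal ∘ ev)
      = Matrix.diagonal (RCLike.ofReal ∘ ev) := by
    rw [← hD]
    calc (star U₁ * P * U₁) * (star U₁ * P * U₁)
        = star U₁ * (P * (U₁ * (star U₁ * (P * U₁)))) := by
          simp only [Matrix.mul_assoc]
      _ = star U₁ * (P * (P * U₁)) := by rw [mul_one_cancel hu1]
      _ = star U₁ * ((P * P) * U₁) := by rw [Matrix.mul_assoc]
      _ = star U₁ * P * U₁ := by rw [hPidem, Matrix.mul_assoc]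
  have hev01 : ∀ i, ev i = 0 ∨ ev i = 1 := by
    intro i
    rw [Matrix.diagonal_mul_diagonal] at hDD
    have h0 := Matrix.diagonal_injective hDD
    have h1 := congrFun h0 i
    simp only [Pi.mul_apply, Function.comp_apply] at h1
    have h2 : ev i * ev i = ev i := by exact_mod_cast h1
    rcases mul_eq_zero.1 (show ev i * (ev i - 1) = 0 by linear_combination h2) with h | h
    · exact Or.inl h
    · exact Or.inr (by linarith [sub_eq_zero.1 h])
  -- trace
  have htr1 : ∑ i, ev i = 1 := by
    have h1 : (Matrix.diagonal (RCLike.ofReal ∘ ev) : Matrix N N ℂ).trace = 1 := by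
      rw [← hD, Matrix.trace_mul_cycle, hu1, Matrix.one_mul, hPtr]
    rw [Matrix.trace_diagonal] at h1
    have h2 : ((∑ i, ev i : ℝ) : ℂ) = 1 := by push_cast; simpa using h1
    exact_mod_cast h2
  -- the distinguished index
  have hex : ∃ k, ev k = 1 := by
    by_contra hcon
    push_neg at hcon
    have hall : ∀ i, ev i = 0 := fun i => (hev01 i).resolve_right (hcon i)
    rw [Finset.sum_eq_zero (fun i _ => hall i)] at htr1
    exact one_ne_zero htr1.symm
  obtain ⟨k, hk1⟩ := hex
  have hk0 : ∀ i, i ≠ k → ev i = 0 := by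
    intro i hik
    have hrest : ∑ j ∈ Finset.univ.erase k, ev j = 0 := by
      have h := Finset.add_sum_erase Finset.univ ev (Finset.mem_univ k)
      rw [htr1, hk1] at h
      linarith
    have hnn : ∀ j ∈ Finset.univ.erase k, 0 ≤ ev j := by
      intro j _
      rcases hev01 j with h | h <;> rw [h] <;> norm_num
    exact (Finset.sum_eq_zero_iff_of_nonneg hnn).1 hrest i
      (Finset.mem_erase.2 ⟨hik, Finset.mem_univ i⟩)
  set c : N → ℂ := fun i => if i = k then (1:ℂ) else 0 with hcdef
  have hDk : (Matrix.diagonal (RCLike.ofReal ∘ ev) : Matrix N N ℂ) = Matrix.diagonal c := by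
    have hfc : (RCLike.ofReal ∘ ev : N → ℂ) = c := by
      funext i
      by_cases h : i = k
      · subst h; simp [hcdef, hk1]
      · simp [hcdef, h, hk0 i h]
    rw [hfc]
  set X₁ : Matrix N N ℂ := star U₁ * X * U₁ with hX₁def
  have hX₁herm : X₁ᴴ = X₁ := by
    simp only [hX₁def, Matrix.conjTranspose_mul, Matrix.star_eq_conjTranspose,
      Matrix.conjTranspose_conjTranspose, hX.eq]
    rw [Matrix.mul_assoc]
  have hcomm : Matrix.diagonal c * X₁ = X₁ * Matrix.diagonal c := by
    rw [← hDk, ← hD, hX₁def]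
    calc (star U₁ * P * U₁) * (star U₁ * X * U₁)
        = star U₁ * (P * (U₁ * (star U₁ * (X * U₁)))) := by simp only [Matrix.mul_assoc]
      _ = star U₁ * ((P * X) * U₁) := by rw [mul_one_cancel hu1, Matrix.mul_assoc]
      _ = star U₁ * ((X * P) * U₁) := by rw [hPX]
      _ = star U₁ * (X * (U₁ * (star U₁ * (P * U₁)))) := by
          rw [mul_one_cancel hu1]
          simp only [Matrix.mul_assoc]
      _ = (star U₁ * X * U₁) * (star U₁ * P * U₁) := by simp only [Matrix.mul_assoc]
  have hrc : ∀ i j, c i * X₁ i j = X₁ i j * c j := by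
    intro i j
    have h := congrFun (congrFun hcomm i) j
    rwa [Matrix.diagonal_mul, Matrix.mul_diagonal] at h
  have hrow : ∀ j, j ≠ k → X₁ k j = 0 := by
    intro j hj
    have h := hrc k j
    simp only [hcdef, if_pos rfl, if_neg hj, one_mul, mul_zero] at h
    exact h
  have hcol : ∀ i, i ≠ k → X₁ i k = 0 := by
    intro i hi
    have h := hrc i k
    simp only [hcdef, if_pos rfl, if_neg hi, zero_mul, mul_one] at h
    exact h.symm
  -- block decomposition
  have hXkk : X₁ k k = ((X₁ k k).re : ℂ) := by
    have h := congrFun (congrFun hX₁herm k) k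
    rw [Matrix.conjTranspose_apply] at h
    exact (Complex.conj_eq_iff_re.1 h).symm
  set eqv : {i : N // i ≠ k} ⊕ {i : N // ¬ i ≠ k} ≃ N := Equiv.sumCompl (· ≠ k) with heqvdef
  set Y' : Matrix {i : N // i ≠ k} {i : N // i ≠ k} ℂ :=
    X₁.submatrix (fun a => (a : N)) (fun a => (a : N)) with hY'def
  have hY' : Y'.IsHermitian := by
    show Y'ᴴ = Y'
    rw [hY'def, Matrix.conjTranspose_submatrix, hX₁herm]
  set V' : Matrix {i : N // i ≠ k} {i : N // i ≠ k} ℂ := (hY'.eigenvectorUnitary :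
    Matrix {i : N // i ≠ k} {i : N // i ≠ k} ℂ) with hV'def
  have hv1 : V' * star V' = 1 := (Matrix.mem_unitaryGroup_iff).1 hY'.eigenvectorUnitary.2
  have hv1' : star V' * V' = 1 := (Matrix.mem_unitaryGroup_iff').1 hY'.eigenvectorUnitary.2
  set μ' := hY'.eigenvalues with hμ'def
  have hD' : star V' * Y' * V' = Matrix.diagonal (RCLike.ofReal ∘ μ') :=
    by have h := hY'.conjStarAlgAut_star_eigenvectorUnitary; rwa [Unitary.conjStarAlgAut_star_apply] at h
  set T : Matrix {i : N // ¬ i ≠ k} {i : N // ¬ i ≠ k} ℂ :=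
    Matrix.diagonal (fun _ => X₁ k k) with hTdef
  have hXb : X₁.submatrix eqv eqv = Matrix.fromBlocks Y' 0 0 T := by
    ext i j
    rcases i with a | a <;> rcases j with b | b
    · simp [heqvdef, hY'def]
    · have hbk : (b : N) = k := not_not.1 b.2
      simp only [Matrix.submatrix_apply, heqvdef, Equiv.sumCompl_apply_inl,
        Equiv.sumCompl_apply_inr, Matrix.fromBlocks_apply₁₂, Matrix.zero_apply]
      rw [hbk]
      exact hcol _ a.2
    · have hak : (a : N) = k := not_not.1 a.2
      simp only [Matrix.submatrix_apply, heqvdef, Equiv.sumCompl_apply_inl,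
        Equiv.sumCompl_apply_inr, Matrix.fromBlocks_apply₂₁, Matrix.zero_apply]
      rw [hak]
      exact hrow _ b.2
    · have hab : a = b := Subtype.ext (by rw [not_not.1 a.2, not_not.1 b.2])
      subst hab
      simp only [Matrix.submatrix_apply, heqvdef, Equiv.sumCompl_apply_inr,
        Matrix.fromBlocks_apply₂₂, hTdef, Matrix.diagonal_apply_eq]
      rw [not_not.1 a.2]
  have hDb : (Matrix.diagonal c).submatrix eqv eqv =
      Matrix.fromBlocks (0 : Matrix {i : N // i ≠ k} {i : N // i ≠ k} ℂ) 0 0 1 := by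
    ext i j
    rcases i with a | a <;> rcases j with b | b
    · simp only [Matrix.submatrix_apply, heqvdef, Equiv.sumCompl_apply_inl,
        Matrix.fromBlocks_apply₁₁, Matrix.zero_apply]
      by_cases h : (a : N) = (b : N)
      · rw [h, Matrix.diagonal_apply_eq, hcdef]
        exact if_neg b.2
      · exact Matrix.diagonal_apply_ne _ h
    · simp only [Matrix.submatrix_apply, heqvdef, Equiv.sumCompl_apply_inl,
        Equiv.sumCompl_apply_inr, Matrix.fromBlocks_apply₁₂, Matrix.zero_apply]
      exact Matrix.diagonal_apply_ne _ (by rw [not_not.1 b.2]; exact a.2)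
    · simp only [Matrix.submatrix_apply, heqvdef, Equiv.sumCompl_apply_inl,
        Equiv.sumCompl_apply_inr, Matrix.fromBlocks_apply₂₁, Matrix.zero_apply]
      exact Matrix.diagonal_apply_ne _ (by rw [not_not.1 a.2]; exact fun h => b.2 h.symm)
    · have hab : a = b := Subtype.ext (by rw [not_not.1 a.2, not_not.1 b.2])
      subst hab
      simp only [Matrix.submatrix_apply, heqvdef, Equiv.sumCompl_apply_inr,
        Matrix.fromBlocks_apply₂₂, Matrix.diagonal_apply_eq, Matrix.one_apply_eq]
      rw [hcdef]
      exact if_pos (not_not.1 a.2)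
  set Vb : Matrix _ _ ℂ := Matrix.fromBlocks V' 0 0
    (1 : Matrix {i : N // ¬ i ≠ k} {i : N // ¬ i ≠ k} ℂ) with hVbdef
  set V : Matrix N N ℂ := Vb.submatrix eqv.symm eqv.symm with hVdef
  have hVbstar : Vbᴴ = Matrix.fromBlocks (star V') 0 0 1 := by
    rw [hVbdef, Matrix.fromBlocks_conjTranspose]
    simp [Matrix.star_eq_conjTranspose]
  have hVbu : Vb * Vbᴴ = 1 := by
    rw [hVbstar, hVbdef, Matrix.fromBlocks_multiply]
    simp only [Matrix.mul_zero, Matrix.zero_mul, Matrix.mul_one, Matrix.one_mul,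
      add_zero, zero_add, hv1]
    exact Matrix.fromBlocks_one
  have hVbu' : Vbᴴ * Vb = 1 := by
    rw [hVbstar, hVbdef, Matrix.fromBlocks_multiply]
    simp only [Matrix.mul_zero, Matrix.zero_mul, Matrix.mul_one, Matrix.one_mul,
      add_zero, zero_add, hv1']
    exact Matrix.fromBlocks_one
  have hVstar : Vᴴ = (Vbᴴ).submatrix eqv.symm eqv.symm := by
    rw [hVdef, Matrix.conjTranspose_submatrix]
  have hVu : V * Vᴴ = 1 := by
    rw [hVdef, hVstar, Matrix.submatrix_mul_equiv, hVbu, Matrix.submatrix_one_equiv]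
  have hVu' : Vᴴ * V = 1 := by
    rw [hVdef, hVstar, Matrix.submatrix_mul_equiv, hVbu', Matrix.submatrix_one_equiv]
  -- conjugating X₁ by V
  have hX₁sub : X₁ = (X₁.submatrix eqv eqv).submatrix eqv.symm eqv.symm := by
    rw [Matrix.submatrix_submatrix, Equiv.self_comp_symm, Matrix.submatrix_id_id]
  have hXV : Vᴴ * X₁ * V = Matrix.diagonal
      ((Sum.elim (RCLike.ofReal ∘ μ') (fun _ => X₁ k k)) ∘ eqv.symm) := by
    rw [hVdef, hVstar]
    conv_lhs => rw [hX₁sub]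
    rw [Matrix.submatrix_mul_equiv, Matrix.submatrix_mul_equiv, hXb]
    rw [hVbstar, hVbdef, Matrix.fromBlocks_multiply, Matrix.fromBlocks_multiply]
    simp only [Matrix.mul_zero, Matrix.zero_mul, Matrix.mul_one, Matrix.one_mul,
      add_zero, zero_add]
    rw [hD', hTdef, Matrix.fromBlocks_diagonal]
    rw [diag_submatrix]
    rfl
  have hPV : Vᴴ * Matrix.diagonal c * V = Matrix.diagonal c := by
    have hcsub : Matrix.diagonal c = ((Matrix.diagonal c).submatrix eqv eqv).submatrix
        eqv.symm eqv.symm := by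
      rw [Matrix.submatrix_submatrix, Equiv.self_comp_symm, Matrix.submatrix_id_id]
    rw [hVdef, hVstar]
    conv_lhs => rw [hcsub]
    rw [Matrix.submatrix_mul_equiv, Matrix.submatrix_mul_equiv, hDb]
    rw [hVbstar, hVbdef, Matrix.fromBlocks_multiply, Matrix.fromBlocks_multiply]
    simp only [Matrix.mul_zero, Matrix.zero_mul, Matrix.mul_one, Matrix.one_mul,
      add_zero, zero_add]
    conv_rhs => rw [hcsub, hDb]
  -- assemble
  refine ⟨U₁ * V, k, fun i => Sum.elim μ' (fun _ => (X₁ k k).re) (eqv.symm i), ?_, ?_, ?_, ?_⟩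
  · rw [Matrix.conjTranspose_mul]
    calc U₁ * V * (Vᴴ * U₁ᴴ) = U₁ * (V * Vᴴ) * U₁ᴴ := by simp only [Matrix.mul_assoc]
      _ = 1 := by rw [hVu, Matrix.mul_one, ← Matrix.star_eq_conjTranspose, hu1]
  · rw [Matrix.conjTranspose_mul]
    have hst : U₁ᴴ * U₁ = 1 := by rw [← Matrix.star_eq_conjTranspose]; exact hu1'
    calc Vᴴ * U₁ᴴ * (U₁ * V) = Vᴴ * (U₁ᴴ * U₁) * V := by simp only [Matrix.mul_assoc]
      _ = 1 := by rw [hst, Matrix.mul_one, hVu']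
  · rw [Matrix.conjTranspose_mul]
    have h1 : Vᴴ * U₁ᴴ * X * (U₁ * V) = Vᴴ * X₁ * V := by
      rw [hX₁def]
      simp only [← Matrix.star_eq_conjTranspose]
      simp only [Matrix.mul_assoc]
    rw [h1, hXV]
    have hfun : (((Sum.elim (RCLike.ofReal ∘ μ') fun _ => X₁ k k)) ∘ eqv.symm)
        = (fun i => ((Sum.elim μ' (fun _ => (X₁ k k).re) (eqv.symm i) : ℝ) : ℂ)) := by
      funext i
      rcases h : eqv.symm i with a | a
      · simp [h]
      · simp only [Function.comp_apply, h, Sum.elim_inr]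
        exact hXkk
    rw [hfun]
  · rw [Matrix.conjTranspose_mul]
    have h1 : Vᴴ * U₁ᴴ * P * (U₁ * V) = Vᴴ * (star U₁ * P * U₁) * V := by
      simp only [← Matrix.star_eq_conjTranspose]
      simp only [Matrix.mul_assoc]
    rw [h1, hD, hDk, hPV]

lemma norm_unitary [Nonempty N] (W : Matrix N N ℂ) (h2 : Wᴴ * W = 1) : ‖W‖ = 1 := by
  have h := CStarRing.norm_star_mul_self (x := W)
  rw [Matrix.star_eq_conjTranspose, h2, norm_one] at h
  rcases mul_self_eq_one_iff.1 h.symm with h1 | h1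
  · exact h1
  · have := norm_nonneg W
    rw [h1] at this
    linarith

lemma norm_conj_le [Nonempty N] (W A : Matrix N N ℂ) (h2 : Wᴴ * W = 1) :
    ‖W * A * Wᴴ‖ ≤ ‖A‖ := by
  have hW : ‖W‖ = 1 := norm_unitary W h2
  have hWH : ‖Wᴴ‖ = 1 := by rw [Matrix.l2_opNorm_conjTranspose]; exact hW
  calc ‖W * A * Wᴴ‖ ≤ ‖W * A‖ * ‖Wᴴ‖ := Matrix.l2_opNorm_mul _ _
    _ ≤ ‖W‖ * ‖A‖ * ‖Wᴴ‖ := by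
        have := Matrix.l2_opNorm_mul W A
        have h0 : (0:ℝ) ≤ ‖Wᴴ‖ := norm_nonneg _
        nlinarith [norm_nonneg (W * A)]
    _ = ‖A‖ := by rw [hW, hWH, one_mul, mul_one]


lemma conjT_conj (W A : Matrix N N ℂ) : (W * A * Wᴴ)ᴴ = W * Aᴴ * Wᴴ := by
  simp only [Matrix.conjTranspose_mul, Matrix.conjTranspose_conjTranspose, Matrix.mul_assoc]

lemma conj_mul_conj (W A B : Matrix N N ℂ) (h : Wᴴ * W = 1) :
    (W * A * Wᴴ) * (W * B * Wᴴ) = W * (A * B) * Wᴴ := by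
  calc (W * A * Wᴴ) * (W * B * Wᴴ)
      = W * (A * ((Wᴴ * W) * (B * Wᴴ))) := by simp only [Matrix.mul_assoc]
    _ = W * (A * (B * Wᴴ)) := by rw [h, Matrix.one_mul]
    _ = W * (A * B) * Wᴴ := by simp only [Matrix.mul_assoc]

end ASCaux

open scoped Matrix

open scoped Matrix.Norms.L2Operator

set_option maxHeartbeats 2000000 in
/-- Let `n ≥ 1` and let `X` be a Hermitian matrix in `Mat_n(ℂ)` with trace
zero. Suppose `P` is an orthogonal projection with `trace P = 1` commuting with `X`. Then
there exist Hermitian `A, B` with `AB = BA`, `X = A - B`, `B = U A U*` for some unitary `U`,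
`max ‖A‖ ‖B‖ ≤ ‖X‖`, and `A P = P A = 0`. -/
theorem abelian_self_commutator_decomposition_orthogonal_to_projection
    (n : ℕ) (hn : 1 ≤ n) (X P : Matrix (Fin n) (Fin n) ℂ)
    (hX : X.IsHermitian) (htr : X.trace = 0)
    (hPstar : Pᴴ = P) (hPidem : P * P = P) (hPtr : P.trace = 1)
    (hPX : P * X = X * P) :
    ∃ A B : Matrix (Fin n) (Fin n) ℂ,
      A.IsHermitian ∧ B.IsHermitian ∧
      A * B = B * A ∧
      X = A - B ∧
      (∃ U : Matrix (Fin n) (Fin n) ℂ,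
        U * Uᴴ = 1 ∧ Uᴴ * U = 1 ∧ B = U * A * Uᴴ) ∧
      max ‖A‖ ‖B‖ ≤ ‖X‖ ∧
      A * P = 0 ∧ P * A = 0 := by
  classical
  obtain ⟨m, rfl⟩ : ∃ m, n = m + 1 := ⟨n - 1, by omega⟩
  obtain ⟨W, k, d, hWu, hWu', hWX, hWP⟩ := ASCaux.diagonalize X P hX hPstar hPidem hPtr hPX
  set Dd : Matrix (Fin (m+1)) (Fin (m+1)) ℂ := Matrix.diagonal (fun i => (d i : ℂ)) with hDddef
  set Dk : Matrix (Fin (m+1)) (Fin (m+1)) ℂ :=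
    Matrix.diagonal (fun i => if i = k then (1:ℂ) else 0) with hDkdef
  have hXW : X = W * Dd * Wᴴ := by
    rw [← hWX]
    calc X = (W * Wᴴ) * X * (W * Wᴴ) := by rw [hWu, Matrix.one_mul, Matrix.mul_one]
      _ = W * (Wᴴ * X * W) * Wᴴ := by simp only [Matrix.mul_assoc]
  have hPW : P = W * Dk * Wᴴ := by
    rw [← hWP]
    calc P = (W * Wᴴ) * P * (W * Wᴴ) := by rw [hWu, Matrix.one_mul, Matrix.mul_one]
      _ = W * (Wᴴ * P * W) * Wᴴ := by simp only [Matrix.mul_assoc]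
  -- trace of d is zero
  have hsum : ∑ i, d i = 0 := by
    have h1 : Dd.trace = 0 := by
      have h0 : X.trace = Dd.trace := by
        rw [hXW, Matrix.trace_mul_cycle, hWu', Matrix.one_mul]
      rw [htr] at h0
      exact h0.symm
    rw [hDddef, Matrix.trace_diagonal] at h1
    have h2 : ((∑ i, d i : ℝ) : ℂ) = 0 := by push_cast; simpa using h1
    exact_mod_cast h2
  -- eigenvalue bound
  have hdle : ∀ i, |d i| ≤ ‖X‖ := by
    intro i
    have h2 : (Wᴴ)ᴴ * Wᴴ = 1 := by rw [Matrix.conjTranspose_conjTranspose]; exact hWu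
    have h3 := ASCaux.norm_conj_le Wᴴ X h2
    rw [Matrix.conjTranspose_conjTranspose] at h3
    have h1 : ‖Dd‖ ≤ ‖X‖ := by rw [← hWX]; exact h3
    exact le_trans (ASCaux.abs_le_norm_diagonal d i) h1
  obtain ⟨a, σ, hak, habd, hdiff⟩ := ASCaux.core m d k ‖X‖ hsum hdle
  set Da : Matrix (Fin (m+1)) (Fin (m+1)) ℂ := Matrix.diagonal (fun i => (a i : ℂ)) with hDadef
  set Db : Matrix (Fin (m+1)) (Fin (m+1)) ℂ :=
    Matrix.diagonal (fun i => (a (σ i) : ℂ)) with hDbdef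
  refine ⟨W * Da * Wᴴ, W * Db * Wᴴ, ?_, ?_, ?_, ?_, ?_, ?_, ?_, ?_⟩
  · show (W * Da * Wᴴ)ᴴ = W * Da * Wᴴ
    rw [ASCaux.conjT_conj]
    have hfun : Daᴴ = Da := by
      rw [hDadef, Matrix.diagonal_conjTranspose]
      exact congrArg Matrix.diagonal (funext fun i => by simp [Complex.conj_ofReal])
    rw [hfun]
  · show (W * Db * Wᴴ)ᴴ = W * Db * Wᴴ
    rw [ASCaux.conjT_conj]
    have hfun : Dbᴴ = Db := by
      rw [hDbdef, Matrix.diagonal_conjTranspose]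
      exact congrArg Matrix.diagonal (funext fun i => by simp [Complex.conj_ofReal])
    rw [hfun]
  · rw [ASCaux.conj_mul_conj _ _ _ hWu', ASCaux.conj_mul_conj _ _ _ hWu']
    rw [hDadef, hDbdef, Matrix.diagonal_mul_diagonal, Matrix.diagonal_mul_diagonal]
    exact congrArg (fun v => W * Matrix.diagonal v * Wᴴ) (mul_comm _ _)
  · rw [hXW]
    have hdd : Dd = Da - Db := by
      rw [hDddef, hDadef, hDbdef, Matrix.diagonal_sub]
      exact congrArg Matrix.diagonal (funext fun i => by
        rw [← hdiff i]; push_cast; ring)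
    rw [hdd, Matrix.mul_sub, Matrix.sub_mul]
  · refine ⟨W * ASCaux.pmat σ⁻¹ * Wᴴ, ?_, ?_, ?_⟩
    · rw [ASCaux.conjT_conj, ASCaux.conj_mul_conj _ _ _ hWu',
        (ASCaux.pmat_unitary σ⁻¹).1, Matrix.mul_one, hWu]
    · rw [ASCaux.conjT_conj, ASCaux.conj_mul_conj _ _ _ hWu',
        (ASCaux.pmat_unitary σ⁻¹).2, Matrix.mul_one, hWu]
    · have hpd : ASCaux.pmat σ⁻¹ * Da * (ASCaux.pmat σ⁻¹)ᴴ = Db := by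
        rw [hDadef, ASCaux.pmat_diag, hDbdef]
        exact congrArg Matrix.diagonal (funext fun i => by rw [inv_inv])
      rw [ASCaux.conjT_conj, ASCaux.conj_mul_conj _ _ _ hWu',
        ASCaux.conj_mul_conj _ _ _ hWu', hpd]
  · have hnX : (0:ℝ) ≤ ‖X‖ := norm_nonneg _
    have hA : ‖W * Da * Wᴴ‖ ≤ ‖X‖ := by
      calc ‖W * Da * Wᴴ‖ ≤ ‖Da‖ := ASCaux.norm_conj_le W Da hWu'
        _ ≤ ‖X‖ := ASCaux.norm_diagonal_le a ‖X‖ hnX habd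
    have hB : ‖W * Db * Wᴴ‖ ≤ ‖X‖ := by
      calc ‖W * Db * Wᴴ‖ ≤ ‖Db‖ := ASCaux.norm_conj_le W Db hWu'
        _ ≤ ‖X‖ := ASCaux.norm_diagonal_le (fun i => a (σ i)) ‖X‖ hnX (fun i => habd _)
    exact max_le hA hB
  · have hz : Da * Dk = 0 := by
      have hfun : ((fun i => ((a i : ℝ) : ℂ)) * fun i => if i = k then (1:ℂ) else 0)
          = (fun _ => (0:ℂ)) := by
        funext i
        show ((a i : ℝ) : ℂ) * (if i = k then (1:ℂ) else 0) = 0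
        by_cases h : i = k
        · rw [if_pos h, h, hak]; simp
        · rw [if_neg h, mul_zero]
      rw [hDadef, hDkdef, Matrix.diagonal_mul_diagonal]
      exact (congrArg Matrix.diagonal hfun).trans Matrix.diagonal_zero
    rw [hPW, ASCaux.conj_mul_conj _ _ _ hWu', hz, Matrix.mul_zero, Matrix.zero_mul]
  · have hz : Dk * Da = 0 := by
      have hfun : ((fun i => if i = k then (1:ℂ) else 0) * fun i => ((a i : ℝ) : ℂ))
          = (fun _ => (0:ℂ)) := by
        funext i
        show (if i = k then (1:ℂ) else 0) * ((a i : ℝ) : ℂ) = 0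
        by_cases h : i = k
        · rw [if_pos h, h, hak]; simp
        · rw [if_neg h, zero_mul]
      rw [hDkdef, hDadef, Matrix.diagonal_mul_diagonal]
      exact (congrArg Matrix.diagonal hfun).trans Matrix.diagonal_zero
    rw [hPW, ASCaux.conj_mul_conj _ _ _ hWu', hz, Matrix.mul_zero, Matrix.zero_mul]
end

section
/- Let n ≥ 1 and let X be a Hermitian matrix in Mat_n(ℂ) with trace zero. Then X is an abelian self-commutator in Mat_n(ℂ): there exists Y ∈ Mat_n(ℂ) such that (Y Y*)(Y* Y) = (Y* Y)(Y Y*) and X = Y Y* − Y* Y. -/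
open scoped Matrix

open Matrix Finset in
private lemma diag_shift_mono (n : ℕ) (d : Fin n → ℝ) (hmono : Monotone d)
    (hsum : ∑ i, d i = 0) :
    ∃ Y : Matrix (Fin n) (Fin n) ℂ,
      (Y * Yᴴ) * (Yᴴ * Y) = (Yᴴ * Y) * (Y * Yᴴ) ∧
      Matrix.diagonal (fun i => (d i : ℂ)) = Y * Yᴴ - Yᴴ * Y := by
  classical
  set g : Fin n → ℝ := fun a => -∑ i ∈ Iic a, d i with hgdef
  have hnonneg : ∀ (s : Finset (Fin n)) (a : Fin n),
      (∀ i ∈ s, i ≤ a) → (∀ i, i ∉ s → a ≤ i) → 0 ≤ -∑ i ∈ s, d i := by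
    intro s a h1 h2
    rcases le_or_gt 0 (d a) with h | h
    · have hcs : ∑ i ∈ s, d i + ∑ i ∈ sᶜ, d i = 0 := by
        rw [Finset.sum_add_sum_compl]; exact hsum
      have h3 : 0 ≤ ∑ i ∈ sᶜ, d i :=
        Finset.sum_nonneg fun i hi => le_trans h (hmono (h2 i (Finset.mem_compl.mp hi)))
      linarith
    · have h3 : ∑ i ∈ s, d i ≤ 0 :=
        Finset.sum_nonpos fun i hi => le_of_lt (lt_of_le_of_lt (hmono (h1 i hi)) h)
      linarith
  have hg : ∀ a, 0 ≤ g a := by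
    intro a
    refine hnonneg _ a (fun i hi => Finset.mem_Iic.mp hi) (fun i hi => ?_)
    have hle : ¬ i ≤ a := fun hle => hi (Finset.mem_Iic.mpr hle)
    exact le_of_lt (lt_of_not_ge hle)
  set w : Fin n → ℝ := fun a => Real.sqrt (g a) with hwdef
  set Y : Matrix (Fin n) (Fin n) ℂ :=
    Matrix.of (fun i j => if (i : ℕ) = (j : ℕ) + 1 then ((w j : ℝ) : ℂ) else 0) with hYdef
  set F : Fin n → ℂ := fun a => ∑ j : Fin n, if (a : ℕ) = (j : ℕ) + 1 then ((g j : ℝ) : ℂ) else 0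
    with hFdef
  have hww : ∀ j, ((w j : ℝ) : ℂ) * star ((w j : ℝ) : ℂ) = ((g j : ℝ) : ℂ) := by
    intro j
    rw [Complex.star_def, Complex.conj_ofReal, ← Complex.ofReal_mul,
      Real.mul_self_sqrt (hg j)]
  -- Y * Yᴴ is diagonal
  have hYY : Y * Yᴴ = Matrix.diagonal F := by
    ext a b
    rw [Matrix.mul_apply]
    by_cases hab : a = b
    · subst hab
      rw [Matrix.diagonal_apply_eq]
      refine Finset.sum_congr rfl fun j _ => ?_
      rw [Matrix.conjTranspose_apply]
      by_cases h : (a : ℕ) = (j : ℕ) + 1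
      · simp only [hYdef, Matrix.of_apply, if_pos h, hww]
      · simp only [hYdef, Matrix.of_apply, if_neg h, zero_mul, star_zero]
    · rw [Matrix.diagonal_apply_ne _ hab]
      refine Finset.sum_eq_zero fun j _ => ?_
      rw [Matrix.conjTranspose_apply]
      by_cases h1 : (a : ℕ) = (j : ℕ) + 1
      · by_cases h2 : (b : ℕ) = (j : ℕ) + 1
        · exact absurd (Fin.ext (h1.trans h2.symm)) hab
        · simp only [hYdef, Matrix.of_apply, if_neg h2, star_zero, mul_zero]
      · simp only [hYdef, Matrix.of_apply, if_neg h1, zero_mul]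
  have hglast : ∀ a : Fin n, ¬ ((a : ℕ) + 1 < n) → g a = 0 := by
    intro a ha
    have huniv : Iic a = Finset.univ := by
      ext i
      simp only [Finset.mem_Iic, Finset.mem_univ, iff_true, Fin.le_def]
      have := i.isLt; have := a.isLt; omega
    simp only [hgdef, huniv, hsum, neg_zero]
  -- Yᴴ * Y is diagonal
  have hYHY : Yᴴ * Y = Matrix.diagonal (fun a => ((g a : ℝ) : ℂ)) := by
    ext a b
    rw [Matrix.mul_apply]
    by_cases hab : a = b
    · subst hab
      rw [Matrix.diagonal_apply_eq]
      have step : ∀ i : Fin n, Yᴴ a i * Y i a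
          = if (i : ℕ) = (a : ℕ) + 1 then ((g a : ℝ) : ℂ) else 0 := by
        intro i
        rw [Matrix.conjTranspose_apply]
        by_cases h : (i : ℕ) = (a : ℕ) + 1
        · simp only [hYdef, Matrix.of_apply, if_pos h]
          rw [mul_comm]; exact hww a
        · simp only [hYdef, Matrix.of_apply, if_neg h, star_zero, zero_mul]
      rw [Finset.sum_congr rfl fun i _ => step i]
      by_cases hn1 : (a : ℕ) + 1 < n
      · have hiff : ∀ i : Fin n, ((i : ℕ) = (a : ℕ) + 1) ↔ (i = ⟨(a : ℕ) + 1, hn1⟩) := by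
          intro i; rw [Fin.ext_iff]
        simp only [hiff]
        rw [Finset.sum_ite_eq' Finset.univ (⟨(a : ℕ) + 1, hn1⟩ : Fin n)
          (fun _ => ((g a : ℝ) : ℂ))]
        simp
      · rw [Finset.sum_eq_zero fun i _ => by
          have : ¬ ((i : ℕ) = (a : ℕ) + 1) := by have := i.isLt; omega
          exact if_neg this]
        rw [hglast a hn1]; simp
    · rw [Matrix.diagonal_apply_ne _ hab]
      refine Finset.sum_eq_zero fun i _ => ?_
      rw [Matrix.conjTranspose_apply]
      by_cases h1 : (i : ℕ) = (a : ℕ) + 1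
      · by_cases h2 : (i : ℕ) = (b : ℕ) + 1
        · exact absurd (Fin.ext (show (a : ℕ) = (b : ℕ) by omega)) hab
        · simp only [hYdef, Matrix.of_apply, if_neg h2, mul_zero]
      · simp only [hYdef, Matrix.of_apply, if_neg h1, star_zero, zero_mul]
  -- the diagonal difference is d
  have hFval : ∀ a : Fin n, F a - ((g a : ℝ) : ℂ) = ((d a : ℝ) : ℂ) := by
    intro a
    by_cases ha0 : (a : ℕ) = 0
    · have hF0 : F a = 0 := by
        refine Finset.sum_eq_zero fun j _ => if_neg (by omega)
      have hIic : Iic a = {a} := by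
        ext i
        simp only [Finset.mem_Iic, Finset.mem_singleton, Fin.le_def, Fin.ext_iff]
        omega
      have hga : g a = -d a := by simp [hgdef, hIic]
      rw [hF0, hga]; push_cast; ring
    · obtain ⟨m, hm⟩ : ∃ m, (a : ℕ) = m + 1 := ⟨(a : ℕ) - 1, by omega⟩
      have hmn : m < n := by have := a.isLt; omega
      set j0 : Fin n := ⟨m, hmn⟩ with hj0
      have hF : F a = ((g j0 : ℝ) : ℂ) := by
        have hiff : ∀ j : Fin n, ((a : ℕ) = (j : ℕ) + 1) ↔ (j = j0) := by
          intro j; rw [Fin.ext_iff]; simp only [hj0]; omega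
        simp only [hFdef, hiff]
        rw [Finset.sum_ite_eq' Finset.univ j0 (fun j => ((g j : ℝ) : ℂ))]
        simp
      have hIic : Iic a = insert a (Iic j0) := by
        ext i
        simp only [Finset.mem_Iic, Finset.mem_insert, Fin.le_def, Fin.ext_iff, hj0]
        omega
      have hnotmem : a ∉ Iic j0 := by
        simp only [Finset.mem_Iic, Fin.le_def, hj0]
        omega
      have hga : g a = -d a + g j0 := by
        simp only [hgdef, hIic, Finset.sum_insert hnotmem]
        ring
      rw [hF, hga]; push_cast; ring
  refine ⟨Y, ?_, ?_⟩
  · rw [hYY, hYHY, Matrix.diagonal_mul_diagonal, Matrix.diagonal_mul_diagonal]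
    exact congrArg _ (funext fun i => mul_comm _ _)
  · rw [hYY, hYHY, Matrix.diagonal_sub]
    exact congrArg _ (funext fun a => (hFval a).symm)

open Matrix in
private lemma diag_shift (n : ℕ) (d : Fin n → ℝ) (hsum : ∑ i, d i = 0) :
    ∃ Y : Matrix (Fin n) (Fin n) ℂ,
      (Y * Yᴴ) * (Yᴴ * Y) = (Yᴴ * Y) * (Y * Yᴴ) ∧
      Matrix.diagonal (fun i => (d i : ℂ)) = Y * Yᴴ - Yᴴ * Y := by
  classical
  obtain ⟨Z, hc, hz⟩ := diag_shift_mono n (d ∘ Tuple.sort d) (Tuple.monotone_sort d)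
    (by show ∑ i, d (Tuple.sort d i) = 0
        rw [Equiv.sum_comp (Tuple.sort d) d]; exact hsum)
  set e : Fin n ≃ Fin n := (Tuple.sort d).symm with hedef
  have hsub : ∀ A B : Matrix (Fin n) (Fin n) ℂ,
      A.submatrix e e * B.submatrix e e = (A * B).submatrix e e := fun A B =>
    Matrix.submatrix_mul_equiv A B e e e
  have hsubH : (Z.submatrix e e)ᴴ = Zᴴ.submatrix e e := Matrix.conjTranspose_submatrix Z e e
  refine ⟨Z.submatrix e e, ?_, ?_⟩
  · rw [hsubH, hsub, hsub, hsub, hsub, hc]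
  · have hs : ((Z * Zᴴ - Zᴴ * Z).submatrix e e : Matrix (Fin n) (Fin n) ℂ)
        = (Z * Zᴴ).submatrix e e - (Zᴴ * Z).submatrix e e := rfl
    have hdd : ((fun i => (((d ∘ ⇑(Tuple.sort d)) i : ℝ) : ℂ)) ∘ ⇑e)
        = fun i => ((d i : ℝ) : ℂ) := by
      funext i; simp [hedef]
    rw [hsubH, hsub, hsub, ← hs, ← hz, Matrix.submatrix_diagonal_equiv, hdd]

/-- Every Hermitian matrix in `Mat_n(ℂ)` with trace zero is an abelian
self-commutator: `X = Y Yᴴ - Yᴴ Y` with `Y Yᴴ` and `Yᴴ Y` commuting. -/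
theorem traceless_hermitian_is_abelian_self_commutator
    (n : ℕ) (hn : 1 ≤ n) (X : Matrix (Fin n) (Fin n) ℂ)
    (hX : X.IsHermitian) (htr : X.trace = 0) :
    ∃ Y : Matrix (Fin n) (Fin n) ℂ,
      (Y * Yᴴ) * (Yᴴ * Y) = (Yᴴ * Y) * (Y * Yᴴ) ∧
      X = Y * Yᴴ - Yᴴ * Y := by
  classical
  set U : Matrix (Fin n) (Fin n) ℂ := (hX.eigenvectorUnitary : Matrix (Fin n) (Fin n) ℂ)
    with hUdef
  have h1 : Uᴴ * U = 1 := by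
    rw [← Matrix.star_eq_conjTranspose]
    exact (Unitary.mem_iff.mp hX.eigenvectorUnitary.2).1
  have h2 : U * Uᴴ = 1 := by
    rw [← Matrix.star_eq_conjTranspose]
    exact (Unitary.mem_iff.mp hX.eigenvectorUnitary.2).2
  have hspec : X = U * Matrix.diagonal (fun i => ((hX.eigenvalues i : ℝ) : ℂ)) * Uᴴ := by
    have := hX.spectral_theorem
    rw [Unitary.conjStarAlgAut_apply] at this
    rw [← Matrix.star_eq_conjTranspose]
    exact this
  have hsum : ∑ i, hX.eigenvalues i = 0 := by
    have htr' : X.trace = ∑ i, ((hX.eigenvalues i : ℝ) : ℂ) := by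
      have e1 : X.trace
          = (U * Matrix.diagonal (fun i => ((hX.eigenvalues i : ℝ) : ℂ)) * Uᴴ).trace := by
        rw [← hspec]
      rw [Matrix.trace_mul_cycle, h1, Matrix.one_mul, Matrix.trace_diagonal] at e1
      exact e1
    rw [htr] at htr'
    have : ((∑ i, hX.eigenvalues i : ℝ) : ℂ) = 0 := by push_cast; rw [← htr']
    exact_mod_cast this
  obtain ⟨Z, hc, hz⟩ := diag_shift n hX.eigenvalues hsum
  have key : ∀ A B : Matrix (Fin n) (Fin n) ℂ,
      (U * A * Uᴴ) * (U * B * Uᴴ) = U * (A * B) * Uᴴ := by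
    intro A B
    calc (U * A * Uᴴ) * (U * B * Uᴴ)
        = U * (A * ((Uᴴ * U) * (B * Uᴴ))) := by simp only [Matrix.mul_assoc]
      _ = U * (A * (B * Uᴴ)) := by rw [h1, Matrix.one_mul]
      _ = U * (A * B) * Uᴴ := by simp only [Matrix.mul_assoc]
  refine ⟨U * Z * Uᴴ, ?_, ?_⟩
  · have hYH : (U * Z * Uᴴ)ᴴ = U * Zᴴ * Uᴴ := by
      simp [Matrix.conjTranspose_mul, Matrix.mul_assoc]
    rw [hYH, key, key, key, key, hc]
  · have hYH : (U * Z * Uᴴ)ᴴ = U * Zᴴ * Uᴴ := by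
      simp [Matrix.conjTranspose_mul, Matrix.mul_assoc]
    rw [hYH, key, key, ← Matrix.sub_mul, ← Matrix.mul_sub, ← hz, ← hspec]
end

section
/- Let n ≥ 1 and let X be a Hermitian matrix in Mat_n(ℂ) with trace zero. Then there exist Hermitian matrices A, B ∈ Mat_n(ℂ) such that: AB = BA; X = A − B; there is a unitary matrix U ∈ Mat_n(ℂ) with B = U A U*; and max(‖A‖, ‖B‖) ≤ ‖X‖. -/
open scoped Matrix

open scoped Matrix.Norms.L2Operator

section Helpers

variable {n : ℕ}

lemma myAux.norm_unitary [NeZero n] {U : Matrix (Fin n) (Fin n) ℂ}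
    (h : Uᴴ * U = 1) : ‖U‖ = 1 := by
  have h2 : ‖Uᴴ * U‖ = ‖U‖ * ‖U‖ := Matrix.l2_opNorm_conjTranspose_mul_self U
  rw [h, CStarRing.norm_one] at h2
  have h3 : (‖U‖ - 1) * (‖U‖ + 1) = 0 := by nlinarith
  rcases mul_eq_zero.mp h3 with h4 | h4
  · linarith
  · nlinarith [norm_nonneg U]

lemma myAux.conj_norm_le [NeZero n] {U : Matrix (Fin n) (Fin n) ℂ}
    (h1 : U * Uᴴ = 1) (h2 : Uᴴ * U = 1) (M : Matrix (Fin n) (Fin n) ℂ) :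
    ‖U * M * Uᴴ‖ ≤ ‖M‖ := by
  have hU : ‖U‖ = 1 := myAux.norm_unitary h2
  have hUH : ‖Uᴴ‖ = 1 := by rw [Matrix.l2_opNorm_conjTranspose]; exact hU
  calc ‖U * M * Uᴴ‖ ≤ ‖U * M‖ * ‖Uᴴ‖ := Matrix.l2_opNorm_mul _ _
    _ ≤ ‖U‖ * ‖M‖ * ‖Uᴴ‖ := by
        have := Matrix.l2_opNorm_mul U M
        have h0 : (0:ℝ) ≤ ‖Uᴴ‖ := norm_nonneg _
        nlinarith
    _ = ‖M‖ := by rw [hU, hUH]; ring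

lemma myAux.diag_norm_le {c : ℝ} (hc : 0 ≤ c) {v : Fin n → ℂ}
    (hv : ∀ i, ‖v i‖ ≤ c) : ‖Matrix.diagonal v‖ ≤ c := by
  rw [Matrix.cstar_norm_def]
  apply ContinuousLinearMap.opNorm_le_bound _ hc
  intro x
  have hfx : ∀ i, (Matrix.toEuclideanCLM (𝕜 := ℂ) (Matrix.diagonal v) x) i = v i * x i := by
    intro i
    have h0 := Matrix.ofLp_toEuclideanCLM (Matrix.diagonal v) x
    have h1 : (WithLp.ofLp ((Matrix.toEuclideanCLM (𝕜 := ℂ) (Matrix.diagonal v)) x)) i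
        = (Matrix.toLin' (Matrix.diagonal v) (WithLp.ofLp x)) i := by rw [h0]; rfl
    simpa [Matrix.toLin'_apply, Matrix.mulVec_diagonal] using h1
  rw [EuclideanSpace.norm_eq, EuclideanSpace.norm_eq]
  have key : ∀ i : Fin n, ‖(Matrix.toEuclideanCLM (𝕜 := ℂ) (Matrix.diagonal v) x) i‖ ^ 2
      ≤ c ^ 2 * ‖x i‖ ^ 2 := by
    intro i
    rw [hfx i, norm_mul, mul_pow]
    have h2 : ‖v i‖ ^ 2 ≤ c ^ 2 := by nlinarith [hv i, norm_nonneg (v i)]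
    exact mul_le_mul_of_nonneg_right h2 (by positivity)
  calc Real.sqrt (∑ i, ‖(Matrix.toEuclideanCLM (𝕜 := ℂ) (Matrix.diagonal v) x) i‖ ^ 2)
      ≤ Real.sqrt (∑ i, c ^ 2 * ‖x i‖ ^ 2) := by
        apply Real.sqrt_le_sqrt
        exact Finset.sum_le_sum fun i _ => key i
    _ = c * Real.sqrt (∑ i, ‖x i‖ ^ 2) := by
        rw [← Finset.mul_sum, Real.sqrt_mul (by positivity), Real.sqrt_sq hc]

lemma myAux.entry_norm_le (v : Fin n → ℂ) (i : Fin n) :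
    ‖v i‖ ≤ ‖Matrix.diagonal v‖ := by
  have h := Matrix.l2_opNorm_mulVec (Matrix.diagonal v) (EuclideanSpace.single i 1)
  have h1 : (Matrix.diagonal v).mulVec ((EuclideanSpace.single i (1:ℂ)) : Fin n → ℂ)
      = Pi.single i (v i) := by
    have : ((EuclideanSpace.single i (1:ℂ)) : Fin n → ℂ) = Pi.single i 1 := rfl
    rw [this, Matrix.diagonal_mulVec_single, mul_one]
  rw [h1] at h
  have h2 : (EuclideanSpace.equiv (Fin n) ℂ).symm (Pi.single i (v i))
      = EuclideanSpace.single i (v i) := rfl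
  rw [h2, EuclideanSpace.norm_single, EuclideanSpace.norm_single, norm_one, mul_one] at h
  exact h

lemma myAux.greedy {n : ℕ} (d : Fin n → ℝ) (c : ℝ) (hd : ∀ i, |d i| ≤ c) :
    ∀ s : Finset (Fin n), ∀ t : ℝ, |t| ≤ c → t + ∑ i ∈ s, d i = 0 →
    ∃ l : List (Fin n), l.Nodup ∧ l.toFinset = s ∧
      ∀ k, k ≤ l.length → |t + ((l.take k).map d).sum| ≤ c := by
  intro s
  induction s using Finset.strongInduction with
  | _ s ih =>
    intro t ht hsum
    rcases s.eq_empty_or_nonempty with rfl | hs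
    · refine ⟨[], List.nodup_nil, by simp, ?_⟩
      intro k hk
      simp at hk
      subst hk
      simpa using ht
    · have key : ∃ i ∈ s, |t + d i| ≤ c := by
        rcases le_or_gt 0 t with htpos | htneg
        · have : ∃ i ∈ s, d i ≤ 0 := by
            by_contra hcon
            push_neg at hcon
            have hpos : 0 < ∑ i ∈ s, d i := Finset.sum_pos hcon hs
            linarith
          obtain ⟨i, his, hdi⟩ := this
          refine ⟨i, his, ?_⟩
          rw [abs_le] at ht ⊢
          have := abs_le.mp (hd i)
          constructor <;> linarith
        · have : ∃ i ∈ s, 0 ≤ d i := by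
            by_contra hcon
            push_neg at hcon
            have hneg : ∑ i ∈ s, d i < 0 := Finset.sum_neg hcon hs
            linarith
          obtain ⟨i, his, hdi⟩ := this
          refine ⟨i, his, ?_⟩
          rw [abs_le] at ht ⊢
          have := abs_le.mp (hd i)
          constructor <;> linarith
      obtain ⟨i, his, ht'⟩ := key
      have hsum' : (t + d i) + ∑ j ∈ s.erase i, d j = 0 := by
        rw [add_assoc, Finset.add_sum_erase _ _ his]
        exact hsum
      obtain ⟨l, hnodup, htof, hpart⟩ := ih _ (Finset.erase_ssubset his) (t + d i) ht' hsum'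
      refine ⟨i :: l, ?_, ?_, ?_⟩
      · rw [List.nodup_cons]
        refine ⟨fun hmem => ?_, hnodup⟩
        have : i ∈ l.toFinset := List.mem_toFinset.mpr hmem
        rw [htof] at this
        exact (Finset.notMem_erase i s) this
      · rw [List.toFinset_cons, htof, Finset.insert_erase his]
      · intro k hk
        cases k with
        | zero => simpa using ht
        | succ k =>
          simp only [List.take_succ_cons, List.map_cons, List.sum_cons, ← add_assoc]
          exact hpart k (by simpa using hk)


lemma myAux.perm_conjTranspose (p : Fin n ≃ Fin n) :
    (p.toPEquiv.toMatrix : Matrix (Fin n) (Fin n) ℂ)ᴴ = p.symm.toPEquiv.toMatrix := by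
  rw [Equiv.toPEquiv_symm, PEquiv.toMatrix_symm]
  ext i j
  simp [Matrix.conjTranspose_apply, Matrix.transpose_apply, PEquiv.toMatrix_apply,
    apply_ite (star : ℂ → ℂ)]

lemma myAux.perm_mul_perm_symm (p : Fin n ≃ Fin n) :
    (p.toPEquiv.toMatrix : Matrix (Fin n) (Fin n) ℂ) * p.symm.toPEquiv.toMatrix = 1 := by
  rw [← PEquiv.toMatrix_trans, ← Equiv.toPEquiv_trans]
  simp

lemma myAux.diagonal_submatrix (v : Fin n → ℂ) (p : Fin n ≃ Fin n) :
    (Matrix.diagonal v).submatrix p p = Matrix.diagonal (v ∘ p) := by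
  ext i j
  by_cases h : i = j
  · subst h; simp
  · rw [Matrix.submatrix_apply, Matrix.diagonal_apply_ne _ (fun hc => h (p.injective hc)),
      Matrix.diagonal_apply_ne _ h]

lemma myAux.perm_conj_diagonal (v : Fin n → ℂ) (p : Fin n ≃ Fin n) :
    (p.toPEquiv.toMatrix : Matrix (Fin n) (Fin n) ℂ) * Matrix.diagonal v
      * (p.toPEquiv.toMatrix : Matrix (Fin n) (Fin n) ℂ)ᴴ = Matrix.diagonal (v ∘ p) := by
  rw [myAux.perm_conjTranspose, PEquiv.toMatrix_toPEquiv_mul, PEquiv.mul_toMatrix_toPEquiv,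
    Matrix.submatrix_submatrix, Equiv.symm_symm]
  have : ((Matrix.diagonal v).submatrix (⇑p ∘ id) (id ∘ ⇑p)) = (Matrix.diagonal v).submatrix p p := rfl
  rw [this, myAux.diagonal_submatrix]

lemma myAux.conj_mul {V : Matrix (Fin n) (Fin n) ℂ} (hV2 : Vᴴ * V = 1)
    (M N : Matrix (Fin n) (Fin n) ℂ) :
    (V * M * Vᴴ) * (V * N * Vᴴ) = V * (M * N) * Vᴴ := by
  have h : (V * M * Vᴴ) * (V * N * Vᴴ) = V * (M * (Vᴴ * V) * N) * Vᴴ := by noncomm_ring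
  rw [h, hV2, Matrix.mul_one]

lemma myAux.herm (V : Matrix (Fin n) (Fin n) ℂ) (f : Fin n → ℝ) :
    (V * Matrix.diagonal (fun i => ((f i : ℝ) : ℂ)) * Vᴴ).IsHermitian := by
  have hstar : star (fun i => ((f i : ℝ) : ℂ)) = fun i => ((f i : ℝ) : ℂ) := by
    funext i
    simp [Complex.conj_ofReal]
  show _ᴴ = _
  rw [Matrix.conjTranspose_mul, Matrix.conjTranspose_mul, Matrix.conjTranspose_conjTranspose,
    Matrix.diagonal_conjTranspose, hstar, Matrix.mul_assoc]

end Helpers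

/-- Let `n ≥ 1` and let `X` be a Hermitian matrix in `Mat_n(ℂ)` with trace
zero. Then there exist Hermitian `A, B` with `AB = BA`, `X = A - B`, `B = U A U*` for some
unitary `U`, and `max ‖A‖ ‖B‖ ≤ ‖X‖`. -/
theorem traceless_hermitian_commuting_unitary_decomposition
    (n : ℕ) (hn : 1 ≤ n) (X : Matrix (Fin n) (Fin n) ℂ)
    (hX : X.IsHermitian) (htr : X.trace = 0) :
    ∃ A B : Matrix (Fin n) (Fin n) ℂ,
      A.IsHermitian ∧ B.IsHermitian ∧
      A * B = B * A ∧
      X = A - B ∧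
      (∃ U : Matrix (Fin n) (Fin n) ℂ,
        U * Uᴴ = 1 ∧ Uᴴ * U = 1 ∧ B = U * A * Uᴴ) ∧
      max ‖A‖ ‖B‖ ≤ ‖X‖ := by
  obtain ⟨m, rfl⟩ : ∃ m, n = m + 1 := ⟨n - 1, by omega⟩
  set d : Fin (m + 1) → ℝ := hX.eigenvalues with hd_def
  set V : Matrix (Fin (m + 1)) (Fin (m + 1)) ℂ := (↑hX.eigenvectorUnitary : Matrix (Fin (m + 1)) (Fin (m + 1)) ℂ) with hV_def
  have hV1 : V * Vᴴ = 1 := by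
    rw [← Matrix.star_eq_conjTranspose]
    exact Matrix.mem_unitaryGroup_iff.mp hX.eigenvectorUnitary.2
  have hV2 : Vᴴ * V = 1 := by
    rw [← Matrix.star_eq_conjTranspose]
    exact Matrix.mem_unitaryGroup_iff'.mp hX.eigenvectorUnitary.2
  set D : Matrix (Fin (m + 1)) (Fin (m + 1)) ℂ := Matrix.diagonal (fun i => ((d i : ℝ) : ℂ))
    with hD_def
  have hspec : X = V * D * Vᴴ := by
    have h := hX.spectral_theorem
    rw [Unitary.conjStarAlgAut_apply, Matrix.star_eq_conjTranspose] at h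
    exact h
  -- trace is sum of eigenvalues
  have htrd : ∑ i, d i = 0 := by
    have h1 : X.trace = ∑ i, ((d i : ℝ) : ℂ) := by
      conv_lhs => rw [hspec]
      rw [Matrix.trace_mul_cycle, hV2, one_mul, Matrix.trace_diagonal]
    have h2 : ((∑ i, d i : ℝ) : ℂ) = 0 := by push_cast; rw [← h1, htr]
    exact_mod_cast h2
  have hc0 : (0 : ℝ) ≤ ‖X‖ := norm_nonneg X
  -- eigenvalues are bounded by ‖X‖
  have hDX : D = Vᴴ * X * V := by
    rw [hspec]
    have e1 : Vᴴ * (V * D * Vᴴ) * V = (Vᴴ * V) * D * (Vᴴ * V) := by noncomm_ring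
    rw [e1, hV2, one_mul, mul_one]
  have hDle : ‖D‖ ≤ ‖X‖ := by
    have h1 : Vᴴ * Vᴴᴴ = 1 := by rw [Matrix.conjTranspose_conjTranspose]; exact hV2
    have h2 : Vᴴᴴ * Vᴴ = 1 := by rw [Matrix.conjTranspose_conjTranspose]; exact hV1
    have h3 := myAux.conj_norm_le h1 h2 X
    rw [Matrix.conjTranspose_conjTranspose] at h3
    rw [hDX]
    exact h3
  have hd : ∀ i, |d i| ≤ ‖X‖ := by
    intro i
    have h1 := myAux.entry_norm_le (fun i => ((d i : ℝ) : ℂ)) i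
    have h2 : ‖((d i : ℝ) : ℂ)‖ = |d i| := by
      rw [Complex.norm_real, Real.norm_eq_abs]
    rw [h2] at h1
    exact h1.trans hDle
  -- greedy reordering
  obtain ⟨l, hnodup, htof, hpart⟩ := myAux.greedy d ‖X‖ hd Finset.univ 0
    (by simpa using hc0) (by simpa using htrd)
  have hlen : l.length = m + 1 := by
    have h := List.toFinset_card_of_nodup hnodup
    rw [htof, Finset.card_univ, Fintype.card_fin] at h
    omega
  obtain ⟨σ, hσ⟩ : ∃ σ : Fin (m + 1) ≃ Fin (m + 1),
      ∀ k : Fin (m + 1), σ k = l.get (Fin.cast hlen.symm k) := by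
    have hinj : Function.Injective (fun k : Fin (m + 1) => l.get (Fin.cast hlen.symm k)) := by
      intro k1 k2 h
      have h2 := List.nodup_iff_injective_get.mp hnodup h
      rw [Fin.ext_iff, Fin.coe_cast, Fin.coe_cast] at h2
      exact Fin.ext h2
    exact ⟨Equiv.ofBijective _ (Finite.injective_iff_bijective.mp hinj), fun k => rfl⟩
  set e : Fin (m + 1) → ℝ := fun k => ((l.take ((k : ℕ) + 1)).map d).sum with he_def
  have he : ∀ k, |e k| ≤ ‖X‖ := by
    intro k
    have h := hpart ((k : ℕ) + 1) (by rw [hlen]; omega)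
    simpa only [zero_add] using h
  have helast : e (Fin.last m) = 0 := by
    show ((l.take (m + 1)).map d).sum = 0
    have ht : l.take (m + 1) = l := List.take_of_length_le (le_of_eq hlen)
    rw [ht]
    have h := List.sum_toFinset d hnodup
    rw [htof] at h
    rw [← h]
    exact htrd
  have hget : ∀ k : Fin (m + 1),
      e k = ((l.take (k : ℕ)).map d).sum + d (σ k) := by
    intro k
    show ((l.take ((k : ℕ) + 1)).map d).sum = _
    rw [List.map_take, List.map_take,
      List.sum_take_succ (l.map d) (k : ℕ) (by rw [List.length_map, hlen]; exact k.isLt)]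
    congr 1
    rw [List.getElem_map]
    congr 1
    rw [hσ k]
    rfl
  set sh : Fin (m + 1) ≃ Fin (m + 1) := finRotate (m + 1) with hsh_def
  have hstep : ∀ j : Fin (m + 1), e (sh j) - e j = d (σ (sh j)) := by
    intro j
    induction j using Fin.lastCases with
    | last =>
      have hshl : sh (Fin.last m) = 0 := by
        rw [hsh_def, finRotate_succ_apply, Fin.last_add_one]
      rw [hshl, helast, sub_zero, hget 0]
      simp
    | cast j' =>
      have hshc : sh (Fin.castSucc j') = Fin.succ j' := by
        rw [hsh_def, finRotate_succ_apply, Fin.coeSucc_eq_succ]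
      rw [hshc, hget (Fin.succ j')]
      have h1 : e (Fin.castSucc j') = ((l.take ((j' : ℕ) + 1)).map d).sum := by
        show ((l.take (((Fin.castSucc j') : ℕ) + 1)).map d).sum = _
        rw [Fin.coe_castSucc]
      have h2 : ((Fin.succ j' : Fin (m + 1)) : ℕ) = (j' : ℕ) + 1 := Fin.val_succ j'
      rw [h1, h2]
      ring
  -- the two diagonal functions
  set a : Fin (m + 1) → ℝ := fun i => e (σ.symm i) with ha_def
  set b : Fin (m + 1) → ℝ := fun i => e (sh.symm (σ.symm i)) with hb_def
  have hab : ∀ i, a i - b i = d i := by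
    intro i
    have h := hstep (sh.symm (σ.symm i))
    rw [Equiv.apply_symm_apply, Equiv.apply_symm_apply] at h
    exact h
  have ha_le : ∀ i, |a i| ≤ ‖X‖ := fun i => he _
  have hb_le : ∀ i, |b i| ≤ ‖X‖ := fun i => he _
  set Da : Matrix (Fin (m + 1)) (Fin (m + 1)) ℂ := Matrix.diagonal (fun i => ((a i : ℝ) : ℂ))
    with hDa_def
  set Db : Matrix (Fin (m + 1)) (Fin (m + 1)) ℂ := Matrix.diagonal (fun i => ((b i : ℝ) : ℂ))
    with hDb_def
  have hDab : D = Da - Db := by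
    have hfun : (fun i => ((d i : ℝ) : ℂ)) = fun i => ((a i : ℝ) : ℂ) - ((b i : ℝ) : ℂ) := by
      funext i
      exact_mod_cast congrArg Complex.ofReal (hab i).symm
    rw [hD_def, hDa_def, hDb_def, Matrix.diagonal_sub, hfun]
  refine ⟨V * Da * Vᴴ, V * Db * Vᴴ, myAux.herm V a, myAux.herm V b, ?_, ?_, ?_, ?_⟩
  · rw [myAux.conj_mul hV2, myAux.conj_mul hV2]
    congr 1
    congr 1
    have hfun : (fun i => ((a i : ℝ) : ℂ) * ((b i : ℝ) : ℂ))
        = fun i => ((b i : ℝ) : ℂ) * ((a i : ℝ) : ℂ) := by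
      funext i
      ring
    rw [hDa_def, hDb_def, Matrix.diagonal_mul_diagonal, Matrix.diagonal_mul_diagonal, hfun]
  · rw [hspec, hDab]
    noncomm_ring
  · -- unitary conjugation
    set p : Fin (m + 1) ≃ Fin (m + 1) := (σ.symm.trans sh.symm).trans σ with hp_def
    have hpc : (fun i => ((a i : ℝ) : ℂ)) ∘ p = fun i => ((b i : ℝ) : ℂ) := by
      funext k
      show ((a (p k) : ℝ) : ℂ) = _
      rw [hp_def, ha_def, hb_def]
      simp [Equiv.symm_apply_apply]
    set P : Matrix (Fin (m + 1)) (Fin (m + 1)) ℂ := p.toPEquiv.toMatrix with hP_def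
    have hP1 : P * Pᴴ = 1 := by
      rw [hP_def, myAux.perm_conjTranspose]
      exact myAux.perm_mul_perm_symm p
    have hP2 : Pᴴ * P = 1 := by
      rw [hP_def, myAux.perm_conjTranspose]
      have := myAux.perm_mul_perm_symm p.symm
      rw [Equiv.symm_symm] at this
      exact this
    refine ⟨V * P * Vᴴ, ?_, ?_, ?_⟩
    · have hct : (V * P * Vᴴ)ᴴ = V * Pᴴ * Vᴴ := by
        rw [Matrix.conjTranspose_mul, Matrix.conjTranspose_mul,
          Matrix.conjTranspose_conjTranspose, Matrix.mul_assoc]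
      rw [hct, myAux.conj_mul hV2, hP1, Matrix.mul_one, hV1]
    · have hct : (V * P * Vᴴ)ᴴ = V * Pᴴ * Vᴴ := by
        rw [Matrix.conjTranspose_mul, Matrix.conjTranspose_mul,
          Matrix.conjTranspose_conjTranspose, Matrix.mul_assoc]
      rw [hct, myAux.conj_mul hV2, hP2, Matrix.mul_one, hV1]
    · have hct : (V * P * Vᴴ)ᴴ = V * Pᴴ * Vᴴ := by
        rw [Matrix.conjTranspose_mul, Matrix.conjTranspose_mul,
          Matrix.conjTranspose_conjTranspose, Matrix.mul_assoc]
      rw [hct, myAux.conj_mul hV2, myAux.conj_mul hV2]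
      have hconj := myAux.perm_conj_diagonal (fun i => ((a i : ℝ) : ℂ)) p
      rw [hpc] at hconj
      congr 1
      congr 1
      rw [hDa_def, hDb_def, hP_def]
      exact hconj.symm
  · have hA : ‖V * Da * Vᴴ‖ ≤ ‖X‖ := by
      refine (myAux.conj_norm_le hV1 hV2 Da).trans ?_
      apply myAux.diag_norm_le hc0
      intro i
      rw [Complex.norm_real, Real.norm_eq_abs]
      exact ha_le i
    have hB : ‖V * Db * Vᴴ‖ ≤ ‖X‖ := by
      refine (myAux.conj_norm_le hV1 hV2 Db).trans ?_
      apply myAux.diag_norm_le hc0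
      intro i
      rw [Complex.norm_real, Real.norm_eq_abs]
      exact hb_le i
    exact max_le hA hB
end

section
/- Let 𝔄 be a unital C*-algebra, and let A₁, A₂ ∈ 𝔄 be self-adjoint elements such that A₁A₂ = A₂A₁ and A₂ = U A₁ U* for some unitary U ∈ 𝔄. Then A₁ − A₂ is an abelian self-commutator in 𝔄, i.e. there exists X ∈ 𝔄 such that (X X*)(X* X) = (X* X)(X X*) and A₁ − A₂ = X X* − X* X. -/
/-! Shifting `A₁` by `‖A₁‖ • 1` makes it positive without changing `A₁ - U A₁ U*`, since conjugation
by `U` fixes scalars. If `P` is a self-adjoint square root of the shifted element `a`, then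
`X = P U*` has `X X* = a` and `X* X = U a U*`, and these commute because `A₁` and `A₂` do. -/

def IsAbelianSelfCommutator {R : Type*} [Mul R] [Sub R] [Star R] (A : R) : Prop :=
  ∃ X : R, (X * star X) * (star X * X) = (star X * X) * (X * star X) ∧ A = X * star X - star X * X

section StarRing

variable {R : Type*} [Ring R] [StarRing R]

lemma isAbelianSelfCommutator_mul_self_sub_conj {P U : R} (hP : IsSelfAdjoint P)
    (hU : star U * U = 1) (hcomm : Commute (P * P) (U * (P * P) * star U)) :
    IsAbelianSelfCommutator (P * P - U * (P * P) * star U) := by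
  have hXX' : P * star U * star (P * star U) = P * P := by
    rw [star_mul, star_star, hP.star_eq, mul_assoc, ← mul_assoc (star U), hU, one_mul]
  have hX'X : star (P * star U) * (P * star U) = U * (P * P) * star U := by
    rw [star_mul, star_star, hP.star_eq]
    noncomm_ring
  exact ⟨P * star U, by rw [hXX', hX'X]; exact hcomm, by rw [hXX', hX'X]⟩

lemma conj_add_algebraMap {S : Type*} [CommSemiring S] [Algebra S R] {U : R}
    (hU : U * star U = 1) (a : R) (r : S) :
    U * (a + algebraMap S R r) * star U = U * a * star U + algebraMap S R r := by
  rw [mul_add, add_mul, ← Algebra.commutes, mul_assoc (algebraMap S R r), hU, mul_one]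

end StarRing

lemma IsSelfAdjoint.isAbelianSelfCommutator_sub_conj {A : Type*} [CStarAlgebra A]
    [PartialOrder A] [StarOrderedRing A] {a U : A} (ha : IsSelfAdjoint a) (hU : U ∈ unitary A)
    (hcomm : Commute a (U * a * star U)) :
    IsAbelianSelfCommutator (a - U * a * star U) := by
  set b := a + algebraMap ℝ A ‖a‖
  have hb : 0 ≤ b := neg_le_iff_add_nonneg.mp ha.neg_algebraMap_norm_le_self
  have hconj : U * b * star U = U * a * star U + algebraMap ℝ A ‖a‖ :=
    conj_add_algebraMap (Unitary.mul_star_self_of_mem hU) a ‖a‖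
  have hsqrt : CFC.sqrt b * CFC.sqrt b = b := CFC.sqrt_mul_sqrt_self b hb
  have key := isAbelianSelfCommutator_mul_self_sub_conj (CFC.sqrt_nonneg b).isSelfAdjoint
    (Unitary.star_mul_self_of_mem hU) (by
      rw [hsqrt, hconj]
      exact ((hcomm.add_right (Algebra.commutes _ _).symm).add_left (Algebra.commutes _ _)))
  rwa [hsqrt, hconj, add_sub_add_right_eq_sub] at key

theorem commuting_unitarily_equivalent_difference_is_abelian_self_commutator_general
    {𝔄 : Type*} [NormedRing 𝔄] [StarRing 𝔄] [CStarRing 𝔄]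
    [NormedAlgebra ℂ 𝔄] [StarModule ℂ 𝔄] [CompleteSpace 𝔄]
    (A₁ A₂ : 𝔄) (hA₁ : A₁ = star A₁)
    (hcomm : A₁ * A₂ = A₂ * A₁)
    (U : 𝔄) (hU₁ : U * star U = 1) (hU₂ : star U * U = 1)
    (hUA : A₂ = U * A₁ * star U) :
    ∃ X : 𝔄, (X * star X) * (star X * X) = (star X * X) * (X * star X) ∧
      A₁ - A₂ = X * star X - star X * X := by
  let : CStarAlgebra 𝔄 := {}
  let := CStarAlgebra.spectralOrder 𝔄
  let := CStarAlgebra.spectralOrderedRing 𝔄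
  subst hUA
  exact IsSelfAdjoint.isAbelianSelfCommutator_sub_conj hA₁.symm ⟨hU₂, hU₁⟩ hcomm

/-- In a unital C*-algebra, if `A₁, A₂` are commuting self-adjoint elements
that are unitarily equivalent, then `A₁ - A₂` is an abelian self-commutator. -/
theorem commuting_unitarily_equivalent_difference_is_abelian_self_commutator
    {𝔄 : Type*} [NormedRing 𝔄] [StarRing 𝔄] [CStarRing 𝔄]
    [NormedAlgebra ℂ 𝔄] [StarModule ℂ 𝔄] [CompleteSpace 𝔄]
    (A₁ A₂ : 𝔄) (hA₁ : A₁ = star A₁) (hA₂ : A₂ = star A₂)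
    (hcomm : A₁ * A₂ = A₂ * A₁)
    (U : 𝔄) (hU₁ : U * star U = 1) (hU₂ : star U * U = 1)
    (hUA : A₂ = U * A₁ * star U) :
    ∃ X : 𝔄, (X * star X) * (star X * X) = (star X * X) * (X * star X) ∧
      A₁ - A₂ = X * star X - star X * X :=
  commuting_unitarily_equivalent_difference_is_abelian_self_commutator_general A₁ A₂ hA₁ hcomm U hU₁
    hU₂ hUA
end

section
/- Let X₁, X₂, Y₁, Y₂ ∈ Mat_n(ℂ). Suppose there exist unitary matrices U, V ∈ Mat_n(ℂ) with X₂ = U X₁ U* and Y₂ = V Y₁ V*, and suppose that for k = 1, 2 the matrices X_k and Y_k are orthogonal, meaning X_k Y_k = Y_k X_k = X_k Y_k* = Y_k* X_k = 0. Then X₁ + Y₁ and X₂ + Y₂ are unitarily equivalent: there exists a unitary matrix W ∈ Mat_n(ℂ) with X₂ + Y₂ = W (X₁ + Y₁) W*. -/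
open scoped Matrix
open Module Submodule

section helpers
local notation "⟪" x ", " y "⟫" => inner (𝕜 := ℂ) x y



theorem orthogonalFamily_triple {E : Type*} [NormedAddCommGroup E] [InnerProductSpace ℂ E]
    (S T : Submodule ℂ E) (hST : ∀ x ∈ S, ∀ y ∈ T, ⟪x, y⟫ = 0) :
    OrthogonalFamily ℂ (fun i => (![S, T, (S ⊔ T)ᗮ] : Fin 3 → Submodule ℂ E) i)
      (fun i => (![S, T, (S ⊔ T)ᗮ] : Fin 3 → Submodule ℂ E) i |>.subtypeₗᵢ) := by
  have horthE : ∀ x ∈ S ⊔ T, ∀ y ∈ (S ⊔ T)ᗮ, ⟪x, y⟫ = 0 := fun x hx y hy => hy x hx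
  have key : ∀ (p q : Submodule ℂ E), (∀ x ∈ p, ∀ y ∈ q, ⟪x, y⟫ = 0) →
      ∀ (v : p) (w : q), ⟪((p.subtypeₗᵢ) v : E), ((q.subtypeₗᵢ) w : E)⟫ = 0 :=
    fun p q h v w => h v v.2 w w.2
  have hsymm : ∀ (p q : Submodule ℂ E), (∀ x ∈ p, ∀ y ∈ q, ⟪x, y⟫ = 0) →
      (∀ x ∈ q, ∀ y ∈ p, ⟪x, y⟫ = 0) := by
    intro p q h x hx y hy
    rw [← inner_conj_symm, h y hy x hx, map_zero]
  intro i j hij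
  have hS_le : S ≤ S ⊔ T := le_sup_left
  have hT_le : T ≤ S ⊔ T := le_sup_right
  fin_cases i <;> fin_cases j <;> simp only [Matrix.cons_val_zero, Matrix.cons_val_one,
    Matrix.head_cons, Matrix.cons_val_two, Matrix.tail_cons] at * <;>
    first
    | exact absurd rfl hij
    | exact key _ _ hST
    | exact key _ _ (hsymm _ _ hST)
    | exact key _ _ (fun x hx y hy => horthE x (hS_le hx) y hy)
    | exact key _ _ (fun x hx y hy => horthE x (hT_le hx) y hy)
    | exact key _ _ (hsymm _ _ (fun x hx y hy => horthE x (hS_le hx) y hy))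
    | exact key _ _ (hsymm _ _ (fun x hx y hy => horthE x (hT_le hx) y hy))

theorem isInternal_triple {E : Type*} [NormedAddCommGroup E] [InnerProductSpace ℂ E]
    [FiniteDimensional ℂ E] (S T : Submodule ℂ E) (hST : ∀ x ∈ S, ∀ y ∈ T, ⟪x, y⟫ = 0) :
    DirectSum.IsInternal (![S, T, (S ⊔ T)ᗮ] : Fin 3 → Submodule ℂ E) := by
  apply DirectSum.isInternal_submodule_of_iSupIndep_of_iSup_eq_top
  · exact (orthogonalFamily_triple S T hST).independent
  · rw [eq_top_iff, ← Submodule.sup_orthogonal_of_hasOrthogonalProjection (K := S ⊔ T)]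
    refine sup_le (sup_le ?_ ?_) ?_
    · exact le_iSup (![S, T, (S ⊔ T)ᗮ] : Fin 3 → Submodule ℂ E) 0
    · exact le_iSup (![S, T, (S ⊔ T)ᗮ] : Fin 3 → Submodule ℂ E) 1
    · exact le_iSup (![S, T, (S ⊔ T)ᗮ] : Fin 3 → Submodule ℂ E) 2

theorem disj_of_orth {G : Type*} [NormedAddCommGroup G] [InnerProductSpace ℂ G]
    (P Q : Submodule ℂ G) (h : ∀ x ∈ P, ∀ y ∈ Q, ⟪x, y⟫ = 0) : P ⊓ Q = ⊥ := by
  rw [eq_bot_iff]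
  intro x hx
  have := h x hx.1 x hx.2
  simpa [inner_self_eq_zero] using this

theorem single_sum_triple {G : Type*} [NormedAddCommGroup G] [InnerProductSpace ℂ G]
    (P : Fin 3 → Submodule ℂ G) (j : Fin 3) (v : P j) :
    (∑ i, ((Pi.single j v : ∀ i, P i) i : G)) = (v : G) := by
  classical
  rw [Finset.sum_eq_single j]
  · simp
  · intro i _ hij
    rw [Pi.single_eq_of_ne hij]; simp
  · simp

theorem glue_orth {E F : Type*} [NormedAddCommGroup E] [InnerProductSpace ℂ E]
    [FiniteDimensional ℂ E] [NormedAddCommGroup F] [InnerProductSpace ℂ F]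
    [FiniteDimensional ℂ F] (hEF : finrank ℂ E = finrank ℂ F)
    (S T : Submodule ℂ E) (S' T' : Submodule ℂ F)
    (hST : ∀ x ∈ S, ∀ y ∈ T, ⟪x, y⟫ = 0)
    (hST' : ∀ x ∈ S', ∀ y ∈ T', ⟪x, y⟫ = 0)
    (a : S ≃ₗᵢ[ℂ] S') (b : T ≃ₗᵢ[ℂ] T') :
    ∃ W : E ≃ₗᵢ[ℂ] F, (∀ x (hx : x ∈ S), W x = a ⟨x, hx⟩) ∧
      (∀ x (hx : x ∈ T), W x = b ⟨x, hx⟩) := by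
  classical
  set V : Fin 3 → Submodule ℂ E := ![S, T, (S ⊔ T)ᗮ] with hV
  set V' : Fin 3 → Submodule ℂ F := ![S', T', (S' ⊔ T')ᗮ] with hV'
  have hfinS : finrank ℂ S = finrank ℂ S' := a.toLinearEquiv.finrank_eq
  have hfinT : finrank ℂ T = finrank ℂ T' := b.toLinearEquiv.finrank_eq
  have hfinR : finrank ℂ (S ⊔ T : Submodule ℂ E) = finrank ℂ (S' ⊔ T' : Submodule ℂ F) := by
    have h1 := Submodule.finrank_sup_add_finrank_inf_eq S T
    have h2 := Submodule.finrank_sup_add_finrank_inf_eq S' T'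
    rw [disj_of_orth S T hST] at h1
    rw [disj_of_orth S' T' hST'] at h2
    simp only [finrank_bot, add_zero] at h1 h2
    omega
  have hfin3 : finrank ℂ ((S ⊔ T)ᗮ : Submodule ℂ E) = finrank ℂ ((S' ⊔ T')ᗮ : Submodule ℂ F) := by
    have h1 := Submodule.finrank_add_finrank_orthogonal (K := S ⊔ T)
    have h2 := Submodule.finrank_add_finrank_orthogonal (K := S' ⊔ T')
    omega
  let c : ((S ⊔ T)ᗮ : Submodule ℂ E) ≃ₗᵢ[ℂ] ((S' ⊔ T')ᗮ : Submodule ℂ F) :=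
    (stdOrthonormalBasis ℂ ((S ⊔ T)ᗮ : Submodule ℂ E)).repr.trans
      ((LinearIsometryEquiv.piLpCongrLeft 2 ℂ ℂ (finCongr hfin3)).trans
        (stdOrthonormalBasis ℂ ((S' ⊔ T')ᗮ : Submodule ℂ F)).repr.symm)
  let f : ∀ i, (V i) ≃ₗᵢ[ℂ] (V' i) := fun i =>
    match i with
    | 0 => a
    | 1 => b
    | 2 => c
  have hintE := isInternal_triple S T hST
  have hintF := isInternal_triple S' T' hST'
  let isoE := hintE.isometryL2OfOrthogonalFamily (orthogonalFamily_triple S T hST)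
  let isoF := hintF.isometryL2OfOrthogonalFamily (orthogonalFamily_triple S' T' hST')
  let W : E ≃ₗᵢ[ℂ] F := isoE.trans ((LinearIsometryEquiv.piLpCongrRight 2 f).trans isoF.symm)
  have hWkey : ∀ (j : Fin 3) (x : E) (hx : x ∈ V j), W x = (f j ⟨x, hx⟩ : F) := by
    intro j x hx
    have h1 : isoE.symm (WithLp.toLp 2 (Pi.single j (⟨x, hx⟩ : V j))) = x := by
      rw [DirectSum.IsInternal.isometryL2OfOrthogonalFamily_symm_apply]
      exact single_sum_triple V j ⟨x, hx⟩
    have h2 : isoE x = WithLp.toLp 2 (Pi.single j (⟨x, hx⟩ : V j)) :=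
      isoE.symm.injective (by rw [LinearIsometryEquiv.symm_apply_apply, h1])
    have h3 : (LinearIsometryEquiv.piLpCongrRight 2 f) (WithLp.toLp 2 (Pi.single j (⟨x, hx⟩ : V j))) =
        WithLp.toLp 2 (Pi.single j (f j ⟨x, hx⟩)) := by
      ext i
      simp only [LinearIsometryEquiv.piLpCongrRight_apply, PiLp.toLp_apply]
      by_cases hij : i = j
      · subst hij; simp
      · rw [Pi.single_eq_of_ne hij, Pi.single_eq_of_ne hij]; simp
    show isoF.symm ((LinearIsometryEquiv.piLpCongrRight 2 f) (isoE x)) = _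
    rw [h2, h3, DirectSum.IsInternal.isometryL2OfOrthogonalFamily_symm_apply]
    exact single_sum_triple V' j (f j ⟨x, hx⟩)
  exact ⟨W, fun x hx => hWkey 0 x hx, fun x hx => hWkey 1 x hx⟩



theorem toEuclideanLin_mul' {n : ℕ} (A B : Matrix (Fin n) (Fin n) ℂ) :
    Matrix.toEuclideanLin (A * B) =
      (Matrix.toEuclideanLin A) ∘ₗ (Matrix.toEuclideanLin B) := by
  apply LinearMap.ext; intro v
  simp [Matrix.toEuclideanLin_apply, Matrix.mulVec_mulVec]

theorem toEuclideanLin_one' {n : ℕ} :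
    Matrix.toEuclideanLin (1 : Matrix (Fin n) (Fin n) ℂ) = LinearMap.id := by
  apply LinearMap.ext; intro v
  simp [Matrix.toEuclideanLin_apply]

theorem inner_range_zero {n : ℕ} (A B : Matrix (Fin n) (Fin n) ℂ) (h : Aᴴ * B = 0) :
    ∀ x ∈ LinearMap.range (Matrix.toEuclideanLin A),
    ∀ y ∈ LinearMap.range (Matrix.toEuclideanLin B), ⟪x, y⟫ = 0 := by
  rintro _ ⟨u, rfl⟩ _ ⟨v, rfl⟩
  rw [show Matrix.toEuclideanLin A = LinearMap.adjoint (Matrix.toEuclideanLin (Aᴴ)) by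
    rw [Matrix.toEuclideanLin_conjTranspose_eq_adjoint, LinearMap.adjoint_adjoint]]
  rw [LinearMap.adjoint_inner_left, ← LinearMap.comp_apply, ← toEuclideanLin_mul', h,
    map_zero, LinearMap.zero_apply, inner_zero_right]

theorem orth_pair {n : ℕ} (X Y : Matrix (Fin n) (Fin n) ℂ)
    (h1 : X * Y = 0) (h2 : Y * X = 0) (h3 : X * Yᴴ = 0) (h4 : Yᴴ * X = 0) :
    ∀ x ∈ (LinearMap.range (Matrix.toEuclideanLin X) ⊔
      LinearMap.range (Matrix.toEuclideanLin Xᴴ)),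
    ∀ y ∈ (LinearMap.range (Matrix.toEuclideanLin Y) ⊔
      LinearMap.range (Matrix.toEuclideanLin Yᴴ)), ⟪x, y⟫ = 0 := by
  intro x hx y hy
  obtain ⟨x1, hx1, x2, hx2, rfl⟩ := Submodule.mem_sup.mp hx
  obtain ⟨y1, hy1, y2, hy2, rfl⟩ := Submodule.mem_sup.mp hy
  have c1 : Xᴴ * Y = 0 := by
    have := congrArg Matrix.conjTranspose h4; simpa [Matrix.conjTranspose_mul] using this
  have c2 : Xᴴ * Yᴴ = 0 := by
    have := congrArg Matrix.conjTranspose h2; simpa [Matrix.conjTranspose_mul] using this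
  have c3 : Xᴴᴴ * Y = 0 := by simpa using h1
  have c4 : Xᴴᴴ * Yᴴ = 0 := by simpa using h3
  simp only [inner_add_left, inner_add_right]
  rw [inner_range_zero X Y c1 x1 hx1 y1 hy1, inner_range_zero X Yᴴ c2 x1 hx1 y2 hy2,
    inner_range_zero Xᴴ Y c3 x2 hx2 y1 hy1, inner_range_zero Xᴴ Yᴴ c4 x2 hx2 y2 hy2]
  ring

noncomputable def unitaryIso {n : ℕ} (U : Matrix (Fin n) (Fin n) ℂ)
    (h1 : U * Uᴴ = 1) (h2 : Uᴴ * U = 1) :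
    EuclideanSpace ℂ (Fin n) ≃ₗᵢ[ℂ] EuclideanSpace ℂ (Fin n) :=
  LinearEquiv.isometryOfInner
    (LinearEquiv.ofLinear (Matrix.toEuclideanLin U) (Matrix.toEuclideanLin Uᴴ)
      (by rw [← toEuclideanLin_mul', h1, toEuclideanLin_one'])
      (by rw [← toEuclideanLin_mul', h2, toEuclideanLin_one']))
    (by
      intro x y
      show ⟪(Matrix.toEuclideanLin U) x, (Matrix.toEuclideanLin U) y⟫ = ⟪x, y⟫
      rw [← LinearMap.adjoint_inner_right, ← Matrix.toEuclideanLin_conjTranspose_eq_adjoint,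
        ← LinearMap.comp_apply, ← toEuclideanLin_mul', h2, toEuclideanLin_one',
        LinearMap.id_apply])

theorem range_eq_top_of_unitary {n : ℕ} (A : Matrix (Fin n) (Fin n) ℂ)
    (h2 : Aᴴ * A = 1) : LinearMap.range (Matrix.toEuclideanLin Aᴴ) = ⊤ := by
  rw [LinearMap.range_eq_top]
  intro y
  exact ⟨Matrix.toEuclideanLin A y, by
    rw [← LinearMap.comp_apply, ← toEuclideanLin_mul', h2, toEuclideanLin_one',
      LinearMap.id_apply]⟩

theorem range_conj {n : ℕ} (A X : Matrix (Fin n) (Fin n) ℂ) (h2 : Aᴴ * A = 1) :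
    LinearMap.range (Matrix.toEuclideanLin (A * X * Aᴴ)) =
      (LinearMap.range (Matrix.toEuclideanLin X)).map (Matrix.toEuclideanLin A) := by
  rw [toEuclideanLin_mul', toEuclideanLin_mul', LinearMap.range_comp,
    range_eq_top_of_unitary A h2, Submodule.map_top, LinearMap.range_comp]

noncomputable def restrictUnitary {n : ℕ} (U : Matrix (Fin n) (Fin n) ℂ)
    (h1 : U * Uᴴ = 1) (h2 : Uᴴ * U = 1)
    (p q : Submodule ℂ (EuclideanSpace ℂ (Fin n)))
    (hq : q = p.map (Matrix.toEuclideanLin U)) : p ≃ₗᵢ[ℂ] q :=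
  LinearIsometryEquiv.ofSurjective
    { toLinearMap := ((Matrix.toEuclideanLin U) ∘ₗ p.subtype).codRestrict q
        (fun x => by rw [hq]; exact Submodule.mem_map_of_mem x.2)
      norm_map' := fun x => by
        show ‖Matrix.toEuclideanLin U (x : EuclideanSpace ℂ (Fin n))‖ =
          ‖(x : EuclideanSpace ℂ (Fin n))‖
        exact (unitaryIso U h1 h2).norm_map _ }
    (by
      rintro ⟨y, hy⟩
      rw [hq] at hy
      obtain ⟨x, hx, rfl⟩ := hy
      exact ⟨⟨x, hx⟩, rfl⟩)

theorem restrictUnitary_apply {n : ℕ} (U : Matrix (Fin n) (Fin n) ℂ)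
    (h1 : U * Uᴴ = 1) (h2 : Uᴴ * U = 1)
    (p q : Submodule ℂ (EuclideanSpace ℂ (Fin n)))
    (hq : q = p.map (Matrix.toEuclideanLin U)) (x : p) :
    ((restrictUnitary U h1 h2 p q hq) x : EuclideanSpace ℂ (Fin n)) =
      Matrix.toEuclideanLin U (x : EuclideanSpace ℂ (Fin n)) := rfl



theorem sum_orth_main {n : ℕ} (X₁ X₂ Y₁ Y₂ : Matrix (Fin n) (Fin n) ℂ)
    (U : Matrix (Fin n) (Fin n) ℂ) (hU₁ : U * Uᴴ = 1) (hU₂ : Uᴴ * U = 1)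
    (hX : X₂ = U * X₁ * Uᴴ)
    (V : Matrix (Fin n) (Fin n) ℂ) (hV₁ : V * Vᴴ = 1) (hV₂ : Vᴴ * V = 1)
    (hY : Y₂ = V * Y₁ * Vᴴ)
    (horth₁ : X₁ * Y₁ = 0 ∧ Y₁ * X₁ = 0 ∧ X₁ * Y₁ᴴ = 0 ∧ Y₁ᴴ * X₁ = 0)
    (horth₂ : X₂ * Y₂ = 0 ∧ Y₂ * X₂ = 0 ∧ X₂ * Y₂ᴴ = 0 ∧ Y₂ᴴ * X₂ = 0) :
    ∃ W : Matrix (Fin n) (Fin n) ℂ,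
      W * Wᴴ = 1 ∧ Wᴴ * W = 1 ∧ X₂ + Y₂ = W * (X₁ + Y₁) * Wᴴ := by
  classical
  set S₁ : Submodule ℂ (EuclideanSpace ℂ (Fin n)) :=
    LinearMap.range (Matrix.toEuclideanLin X₁) ⊔ LinearMap.range (Matrix.toEuclideanLin X₁ᴴ)
    with hS₁def
  set T₁ : Submodule ℂ (EuclideanSpace ℂ (Fin n)) :=
    LinearMap.range (Matrix.toEuclideanLin Y₁) ⊔ LinearMap.range (Matrix.toEuclideanLin Y₁ᴴ)
    with hT₁def
  set S₂ : Submodule ℂ (EuclideanSpace ℂ (Fin n)) :=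
    LinearMap.range (Matrix.toEuclideanLin X₂) ⊔ LinearMap.range (Matrix.toEuclideanLin X₂ᴴ)
    with hS₂def
  set T₂ : Submodule ℂ (EuclideanSpace ℂ (Fin n)) :=
    LinearMap.range (Matrix.toEuclideanLin Y₂) ⊔ LinearMap.range (Matrix.toEuclideanLin Y₂ᴴ)
    with hT₂def
  have hXc : X₂ᴴ = U * X₁ᴴ * Uᴴ := by
    rw [hX]; simp [Matrix.conjTranspose_mul, Matrix.mul_assoc]
  have hYc : Y₂ᴴ = V * Y₁ᴴ * Vᴴ := by
    rw [hY]; simp [Matrix.conjTranspose_mul, Matrix.mul_assoc]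
  have hS₂map : S₂ = S₁.map (Matrix.toEuclideanLin U) := by
    rw [hS₂def, hS₁def, Submodule.map_sup, hXc, hX, range_conj _ _ hU₂, range_conj _ _ hU₂]
  have hT₂map : T₂ = T₁.map (Matrix.toEuclideanLin V) := by
    rw [hT₂def, hT₁def, Submodule.map_sup, hYc, hY, range_conj _ _ hV₂, range_conj _ _ hV₂]
  have hST₁ : ∀ x ∈ S₁, ∀ y ∈ T₁, ⟪x, y⟫ = 0 :=
    orth_pair X₁ Y₁ horth₁.1 horth₁.2.1 horth₁.2.2.1 horth₁.2.2.2
  have hST₂ : ∀ x ∈ S₂, ∀ y ∈ T₂, ⟪x, y⟫ = 0 :=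
    orth_pair X₂ Y₂ horth₂.1 horth₂.2.1 horth₂.2.2.1 horth₂.2.2.2
  obtain ⟨Wiso, hWa, hWb⟩ := glue_orth rfl S₁ T₁ S₂ T₂ hST₁ hST₂
    (restrictUnitary U hU₁ hU₂ S₁ S₂ hS₂map) (restrictUnitary V hV₁ hV₂ T₁ T₂ hT₂map)
  -- composition identities
  have hWX : Wiso.toLinearMap ∘ₗ Matrix.toEuclideanLin X₁ =
      Matrix.toEuclideanLin U ∘ₗ Matrix.toEuclideanLin X₁ := by
    apply LinearMap.ext; intro v
    have hmem : Matrix.toEuclideanLin X₁ v ∈ S₁ :=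
      Submodule.mem_sup_left (LinearMap.mem_range_self _ v)
    show Wiso _ = _
    rw [hWa _ hmem, restrictUnitary_apply]; rfl
  have hWXc : Wiso.toLinearMap ∘ₗ Matrix.toEuclideanLin X₁ᴴ =
      Matrix.toEuclideanLin U ∘ₗ Matrix.toEuclideanLin X₁ᴴ := by
    apply LinearMap.ext; intro v
    have hmem : Matrix.toEuclideanLin X₁ᴴ v ∈ S₁ :=
      Submodule.mem_sup_right (LinearMap.mem_range_self _ v)
    show Wiso _ = _
    rw [hWa _ hmem, restrictUnitary_apply]; rfl
  have hWY : Wiso.toLinearMap ∘ₗ Matrix.toEuclideanLin Y₁ =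
      Matrix.toEuclideanLin V ∘ₗ Matrix.toEuclideanLin Y₁ := by
    apply LinearMap.ext; intro v
    have hmem : Matrix.toEuclideanLin Y₁ v ∈ T₁ :=
      Submodule.mem_sup_left (LinearMap.mem_range_self _ v)
    show Wiso _ = _
    rw [hWb _ hmem, restrictUnitary_apply]; rfl
  have hWYc : Wiso.toLinearMap ∘ₗ Matrix.toEuclideanLin Y₁ᴴ =
      Matrix.toEuclideanLin V ∘ₗ Matrix.toEuclideanLin Y₁ᴴ := by
    apply LinearMap.ext; intro v
    have hmem : Matrix.toEuclideanLin Y₁ᴴ v ∈ T₁ :=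
      Submodule.mem_sup_right (LinearMap.mem_range_self _ v)
    show Wiso _ = _
    rw [hWb _ hmem, restrictUnitary_apply]; rfl
  have hWadj : LinearMap.adjoint Wiso.toLinearMap = Wiso.symm.toLinearMap := by
    symm
    rw [LinearMap.eq_adjoint_iff]
    intro x y
    show ⟪Wiso.symm x, y⟫ = ⟪x, Wiso y⟫
    rw [← LinearIsometryEquiv.inner_map_map Wiso, Wiso.apply_symm_apply]
  have hXWs : Matrix.toEuclideanLin X₁ ∘ₗ Wiso.symm.toLinearMap =
      Matrix.toEuclideanLin X₁ ∘ₗ Matrix.toEuclideanLin Uᴴ := by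
    have h := congrArg LinearMap.adjoint hWXc
    rw [LinearMap.adjoint_comp, LinearMap.adjoint_comp, hWadj,
      ← Matrix.toEuclideanLin_conjTranspose_eq_adjoint,
      ← Matrix.toEuclideanLin_conjTranspose_eq_adjoint,
      Matrix.conjTranspose_conjTranspose] at h
    exact h
  have hYWs : Matrix.toEuclideanLin Y₁ ∘ₗ Wiso.symm.toLinearMap =
      Matrix.toEuclideanLin Y₁ ∘ₗ Matrix.toEuclideanLin Vᴴ := by
    have h := congrArg LinearMap.adjoint hWYc
    rw [LinearMap.adjoint_comp, LinearMap.adjoint_comp, hWadj,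
      ← Matrix.toEuclideanLin_conjTranspose_eq_adjoint,
      ← Matrix.toEuclideanLin_conjTranspose_eq_adjoint,
      Matrix.conjTranspose_conjTranspose] at h
    exact h
  refine ⟨Matrix.toEuclideanLin.symm Wiso.toLinearMap, ?_, ?_, ?_⟩
  all_goals
    have hWm : Matrix.toEuclideanLin (Matrix.toEuclideanLin.symm Wiso.toLinearMap) =
        Wiso.toLinearMap := Matrix.toEuclideanLin.apply_symm_apply _
  all_goals
    have hWmc : Matrix.toEuclideanLin (Matrix.toEuclideanLin.symm Wiso.toLinearMap)ᴴ =
        Wiso.symm.toLinearMap := by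
      rw [Matrix.toEuclideanLin_conjTranspose_eq_adjoint, hWm, hWadj]
  · apply Matrix.toEuclideanLin.injective
    rw [toEuclideanLin_mul', hWm, hWmc, toEuclideanLin_one']
    apply LinearMap.ext; intro v
    simp
  · apply Matrix.toEuclideanLin.injective
    rw [toEuclideanLin_mul', hWm, hWmc, toEuclideanLin_one']
    apply LinearMap.ext; intro v
    simp
  · apply Matrix.toEuclideanLin.injective
    rw [map_add, toEuclideanLin_mul', toEuclideanLin_mul', hWm, hWmc, hX, hY,
      toEuclideanLin_mul', toEuclideanLin_mul', toEuclideanLin_mul', toEuclideanLin_mul',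
      map_add]
    apply LinearMap.ext; intro v
    have e1 := LinearMap.congr_fun hXWs v
    have e2 := LinearMap.congr_fun hYWs v
    have e3 := fun w => LinearMap.congr_fun hWX w
    have e4 := fun w => LinearMap.congr_fun hWY w
    simp only [LinearMap.comp_apply] at e1 e2 e3 e4 ⊢
    simp only [LinearMap.add_apply, map_add]
    rw [e1, e2, e3, e4]
    simp only [LinearMap.comp_apply]

end helpers

/-- If `X₁ ≈ X₂`, `Y₁ ≈ Y₂` (unitary equivalence in `Mat_n(ℂ)`) and
`X_k ⊥ Y_k` for `k = 1, 2`, then `X₁ + Y₁ ≈ X₂ + Y₂`. -/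
theorem sum_of_orthogonal_unitarily_equivalent
    (n : ℕ) (X₁ X₂ Y₁ Y₂ : Matrix (Fin n) (Fin n) ℂ)
    (U : Matrix (Fin n) (Fin n) ℂ) (hU₁ : U * Uᴴ = 1) (hU₂ : Uᴴ * U = 1)
    (hX : X₂ = U * X₁ * Uᴴ)
    (V : Matrix (Fin n) (Fin n) ℂ) (hV₁ : V * Vᴴ = 1) (hV₂ : Vᴴ * V = 1)
    (hY : Y₂ = V * Y₁ * Vᴴ)
    (horth₁ : X₁ * Y₁ = 0 ∧ Y₁ * X₁ = 0 ∧ X₁ * Y₁ᴴ = 0 ∧ Y₁ᴴ * X₁ = 0)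
    (horth₂ : X₂ * Y₂ = 0 ∧ Y₂ * X₂ = 0 ∧ X₂ * Y₂ᴴ = 0 ∧ Y₂ᴴ * X₂ = 0) :
    ∃ W : Matrix (Fin n) (Fin n) ℂ,
      W * Wᴴ = 1 ∧ Wᴴ * W = 1 ∧ X₂ + Y₂ = W * (X₁ + Y₁) * Wᴴ := by
  exact sum_orth_main X₁ X₂ Y₁ Y₂ U hU₁ hU₂ hX V hV₁ hV₂ hY horth₁ horth₂
end

section
/- Let n ≥ 1 and let X be a Hermitian matrix in Mat_n(ℂ) with trace zero. Then there exists Y ∈ Mat_n(ℂ) such that (Y Y*)(Y* Y) = (Y* Y)(Y Y*), X = Y Y* − Y* Y, and ‖Y‖² ≤ 2‖X‖. -/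
open scoped Matrix

open scoped Matrix.Norms.L2Operator


private lemma sum_map_neg_eq {ι : Type*} (v : ι → ℝ) (l : List ι) :
    (l.map (fun x => -(v x))).sum = -(l.map v).sum := by
  induction l with
  | nil => simp
  | cons a t iht => simp [iht]; ring

theorem greedy_list {ι : Type*} [DecidableEq ι] (v : ι → ℝ) (M : ℝ) :
    ∀ (l : List ι) (c : ℝ), (∀ i ∈ l, |v i| ≤ M) → |c| ≤ M → c + (l.map v).sum = 0 →
    ∃ l' : List ι, l'.Perm l ∧ ∀ k : ℕ, |c + ((l'.take k).map v).sum| ≤ M := by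
  suffices key : ∀ (n : ℕ) (l : List ι), l.length = n → ∀ c : ℝ,
      (∀ i ∈ l, |v i| ≤ M) → |c| ≤ M → c + (l.map v).sum = 0 →
      ∃ l' : List ι, l'.Perm l ∧ ∀ k : ℕ, |c + ((l'.take k).map v).sum| ≤ M by
    intro l c hb hc hsum; exact key l.length l rfl c hb hc hsum
  intro n
  induction n using Nat.strong_induction_on with
  | _ n ih =>
    intro l hn c hb hc hsum
    rcases List.eq_nil_or_concat l with rfl | ⟨l₀, y, rfl⟩
    · exact ⟨[], List.Perm.refl _, fun k => by simpa using hc⟩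
    · set l := l₀.concat y with hl
      have hne : l ≠ [] := by simp [hl]
      clear_value l
      clear hl l₀
      -- choose x of appropriate sign
      have hex : ∃ x ∈ l, |c + v x| ≤ M := by
        rcases le_or_gt 0 c with h0 | h0
        · have : ∃ x ∈ l, v x ≤ 0 := by
            by_contra hcon
            push_neg at hcon
            have : 0 < (l.map v).sum := by
              apply List.sum_pos
              · intro y hy
                rcases List.mem_map.mp hy with ⟨x, hx, rfl⟩
                exact hcon x hx
              · simpa using hne
            linarith
          obtain ⟨x, hx, hvx⟩ := this
          have hbx := abs_le.mp (hb x hx)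
          exact ⟨x, hx, abs_le.mpr ⟨by linarith, by linarith [abs_le.mp hc]⟩⟩
        · have : ∃ x ∈ l, 0 ≤ v x := by
            by_contra hcon
            push_neg at hcon
            have : 0 < (l.map (fun x => -(v x))).sum := by
              apply List.sum_pos
              · intro y hy
                rcases List.mem_map.mp hy with ⟨x, hx, rfl⟩
                simpa using hcon x hx
              · simpa using hne
            have h2 := sum_map_neg_eq v l
            linarith
          obtain ⟨x, hx, hvx⟩ := this
          have hbx := abs_le.mp (hb x hx)
          exact ⟨x, hx, abs_le.mpr ⟨by linarith [abs_le.mp hc], by linarith⟩⟩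
      obtain ⟨x, hxl, hc'⟩ := hex
      have hperm : (x :: l.erase x).Perm l := (List.perm_cons_erase hxl).symm
      have hsum' : (c + v x) + ((l.erase x).map v).sum = 0 := by
        have : ((x :: l.erase x).map v).sum = (l.map v).sum := (hperm.map v).sum_eq
        simp only [List.map_cons, List.sum_cons] at this
        linarith
      have hlen : (l.erase x).length < n := by
        have := List.length_erase_add_one hxl
        omega
      obtain ⟨l'', hl''p, hl''⟩ := ih _ hlen (l.erase x) rfl (c + v x)
        (fun i hi => hb i (List.mem_of_mem_erase hi)) hc' hsum'
      refine ⟨x :: l'', (hl''p.cons x).trans hperm, fun k => ?_⟩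
      cases k with
      | zero => simpa using hc
      | succ k => simpa [add_assoc] using hl'' k

theorem exists_potential (n : ℕ) (hn : 0 < n) (M : ℝ) (hM : 0 ≤ M) (v : Fin n → ℝ)
    (hv : ∀ i, |v i| ≤ M) (hsum : ∑ i, v i = 0) :
    ∃ (a : Fin n → ℝ) (τ : Equiv.Perm (Fin n)),
      (∀ i, 0 ≤ a i) ∧ (∀ i, a i ≤ 2 * M) ∧ ∀ i, a i - a (τ i) = v i := by
  haveI : NeZero n := ⟨hn.ne'⟩
  obtain ⟨l', hl'p, hl'⟩ := greedy_list v M (List.finRange n) 0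
    (fun i _ => hv i) (by simpa using hM) (by simpa [← Fin.sum_univ_def] using hsum)
  have hlen : l'.length = n := by simpa using hl'p.length_eq
  have hnd : l'.Nodup := hl'p.nodup_iff.mpr (List.nodup_finRange n)
  set g : Fin n → Fin n := fun k => l'.get (Fin.cast hlen.symm k) with hg
  have hginj : Function.Injective g := by
    intro a b hab
    have := (List.nodup_iff_injective_get.mp hnd) hab
    simpa [Fin.ext_iff] using this
  let e : Fin n ≃ Fin n := Equiv.ofBijective g ((Finite.injective_iff_bijective).mp hginj)
  set T : ℕ → ℝ := fun k => ((l'.take k).map v).sum with hT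
  have hTb : ∀ k, |T k| ≤ M := fun k => by simpa only [zero_add] using hl' k
  have hTsucc : ∀ k : Fin n, T (k.val + 1) = T k.val + v (e k) := by
    intro k
    have hk : (k : ℕ) < (l'.map v).length := by simp [hlen]
    have h1 := List.sum_take_succ (l'.map v) k hk
    simp only [hT, List.map_take]
    rw [h1]
    congr 1
    simp only [List.getElem_map]
    rfl
  have hTn : T n = 0 := by
    have h1 : l'.take n = l' := List.take_of_length_le (le_of_eq hlen)
    have h2 : ((l'.map v)).sum = ((List.finRange n).map v).sum := (hl'p.map v).sum_eq
    simp only [hT, h1, h2, ← Fin.sum_univ_def, hsum]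
  refine ⟨fun i => M - T ((e.symm i : Fin n) : ℕ),
    e.symm.trans ((Equiv.addRight (1 : Fin n)).trans e), ?_, ?_, ?_⟩
  · intro i; dsimp only; have := (abs_le.mp (hTb (e.symm i : Fin n))).2; linarith
  · intro i; dsimp only; have := (abs_le.mp (hTb (e.symm i : Fin n))).1; linarith
  · intro i
    have hi : i = e (e.symm i) := (e.apply_symm_apply i).symm
    simp only [Equiv.trans_apply, Equiv.coe_addRight, Equiv.symm_apply_apply]
    set k : Fin n := e.symm i
    rcases Nat.lt_or_ge (k.val + 1) n with hlt | hge
    · have hval : ((k + 1 : Fin n) : ℕ) = k.val + 1 := by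
        simp [Fin.add_def, Nat.mod_eq_of_lt hlt]
      rw [hval, hTsucc k, ← hi]
      ring
    · have heq : k.val + 1 = n := by omega
      have hval : ((k + 1 : Fin n) : ℕ) = 0 := by
        simp [Fin.add_def, heq]
      have hstep := hTsucc k
      rw [heq, hTn, ← hi] at hstep
      have h0 : T 0 = 0 := by simp [hT]
      rw [hval, h0]
      linarith




lemma diag_norm_le {n : ℕ} (d : Fin n → ℂ) (C : ℝ) (hC : 0 ≤ C) (hd : ∀ i, ‖d i‖ ≤ C) :
    ‖(Matrix.diagonal d : Matrix (Fin n) (Fin n) ℂ)‖ ≤ C := by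
  rw [Matrix.l2_opNorm_def]
  apply ContinuousLinearMap.opNorm_le_bound _ hC
  intro x
  set y := ((Matrix.toEuclideanLin ≪≫ₗ LinearMap.toContinuousLinearMap) (Matrix.diagonal d)) x
    with hy
  have hyi : ∀ i, y i = d i * x i := by
    intro i
    simp [hy, Matrix.toEuclideanLin_apply, Matrix.mulVec_diagonal]
  rw [EuclideanSpace.norm_eq, EuclideanSpace.norm_eq]
  rw [← Real.sqrt_sq hC, ← Real.sqrt_mul (sq_nonneg C)]
  apply Real.sqrt_le_sqrt
  rw [Finset.mul_sum]
  apply Finset.sum_le_sum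
  intro i _
  rw [hyi i, norm_mul]
  have h1 : ‖x i‖ ≥ 0 := norm_nonneg _
  have h2 := hd i
  have h3 : ‖d i‖ ≥ 0 := norm_nonneg _
  rw [mul_pow]
  have h4 : ‖d i‖ ^ 2 ≤ C ^ 2 := by nlinarith
  exact mul_le_mul_of_nonneg_right h4 (sq_nonneg _)

lemma le_diag_norm {n : ℕ} (d : Fin n → ℂ) (i : Fin n) :
    ‖d i‖ ≤ ‖(Matrix.diagonal d : Matrix (Fin n) (Fin n) ℂ)‖ := by
  have h := Matrix.l2_opNorm_mulVec (Matrix.diagonal d)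
    ((EuclideanSpace.equiv (Fin n) ℂ).symm (Pi.single i 1))
  have h1 : Matrix.diagonal d *ᵥ ((EuclideanSpace.equiv (Fin n) ℂ).symm (Pi.single i 1) :
      EuclideanSpace ℂ (Fin n)) = Pi.single i (d i) := by
    have := Matrix.diagonal_mulVec_single d i (1 : ℂ)
    simp only [mul_one] at this
    convert this using 2
    rfl
  rw [h1] at h
  have h2 : ‖((EuclideanSpace.equiv (Fin n) ℂ).symm (Pi.single i (d i)) :
      EuclideanSpace ℂ (Fin n))‖ = ‖d i‖ := by
    simpa using EuclideanSpace.norm_single (𝕜 := ℂ) i (d i)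
  have h3 : ‖((EuclideanSpace.equiv (Fin n) ℂ).symm (Pi.single i (1:ℂ)) :
      EuclideanSpace ℂ (Fin n))‖ = 1 := by
    simpa using EuclideanSpace.norm_single (𝕜 := ℂ) i (1:ℂ)
  rw [h2, h3, mul_one] at h
  exact h

/-- Let `n ≥ 1` and `X` a Hermitian matrix in `Mat_n(ℂ)` with trace zero.
Then `X = Y Yᴴ - Yᴴ Y` for some `Y` with `Y Yᴴ` and `Yᴴ Y` commuting and `‖Y‖² ≤ 2 ‖X‖`. -/
theorem traceless_hermitian_abelian_self_commutator_norm_bound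
    (n : ℕ) (hn : 1 ≤ n) (X : Matrix (Fin n) (Fin n) ℂ)
    (hX : X.IsHermitian) (htr : X.trace = 0) :
    ∃ Y : Matrix (Fin n) (Fin n) ℂ,
      (Y * Yᴴ) * (Yᴴ * Y) = (Yᴴ * Y) * (Y * Yᴴ) ∧
      X = Y * Yᴴ - Yᴴ * Y ∧
      ‖Y‖ ^ 2 ≤ 2 * ‖X‖ := by
  classical
  set U : Matrix (Fin n) (Fin n) ℂ := (hX.eigenvectorUnitary : Matrix (Fin n) (Fin n) ℂ) with hU
  have hUmem : U ∈ unitary (Matrix (Fin n) (Fin n) ℂ) := hX.eigenvectorUnitary.2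
  have hsUmem : star U ∈ unitary (Matrix (Fin n) (Fin n) ℂ) := Unitary.star_mem hUmem
  have hUsU : U * star U = 1 := Unitary.mul_star_self_of_mem hUmem
  have hsUU : star U * U = 1 := Unitary.star_mul_self_of_mem hUmem
  set v : Fin n → ℝ := hX.eigenvalues with hv
  set D : Matrix (Fin n) (Fin n) ℂ := Matrix.diagonal (fun i => (v i : ℂ)) with hD
  have hspec : X = U * D * star U := by
    have := hX.spectral_theorem
    rw [Unitary.conjStarAlgAut_apply] at this
    exact this
  -- the norm of X equals the norm of D
  have hDX : ‖D‖ = ‖X‖ := by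
    rw [hspec, CStarRing.norm_mul_mem_unitary _ hsUmem, CStarRing.norm_mem_unitary_mul _ hUmem]
  -- eigenvalue bounds
  have hvb : ∀ i, |v i| ≤ ‖X‖ := by
    intro i
    have := le_diag_norm (fun i => (v i : ℂ)) i
    rw [← hD] at this
    simpa [hDX, Complex.norm_real] using this
  -- trace
  have hvsum : ∑ i, v i = 0 := by
    have h1 : X.trace = D.trace := by
      rw [hspec, Matrix.trace_mul_cycle, hsUU, one_mul]
    have h2 : D.trace = ((∑ i, v i : ℝ) : ℂ) := by
      simp [hD, Matrix.trace_diagonal]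
    have h3 := h2.symm.trans (h1.symm.trans htr)
    exact_mod_cast h3
  have hXnn : (0:ℝ) ≤ ‖X‖ := norm_nonneg _
  obtain ⟨a, τ, ha0, ha2, hav⟩ := exists_potential n hn ‖X‖ hXnn v hvb hvsum
  -- the model matrix in the eigenbasis
  set Y₀ : Matrix (Fin n) (Fin n) ℂ :=
    Matrix.of fun i j => if j = τ.symm i then ((Real.sqrt (a i) : ℝ) : ℂ) else 0 with hY₀
  have hYY : Y₀ * Y₀ᴴ = Matrix.diagonal (fun i => ((a i : ℝ) : ℂ)) := by
    ext i j
    simp only [Matrix.mul_apply, Matrix.conjTranspose_apply, hY₀, Matrix.of_apply,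
      Matrix.diagonal_apply]
    rw [Finset.sum_eq_single (τ.symm i)]
    · by_cases h : i = j
      · subst h
        simp [← Complex.ofReal_mul, Real.mul_self_sqrt (ha0 i)]
      · have : ¬ (τ.symm i = τ.symm j) := fun hc => h (τ.symm.injective hc)
        simp [this, h]
    · intro k _ hk
      simp [hk]
    · simp
  have hYY' : Y₀ᴴ * Y₀ = Matrix.diagonal (fun i => ((a (τ i) : ℝ) : ℂ)) := by
    ext i j
    simp only [Matrix.mul_apply, Matrix.conjTranspose_apply, hY₀, Matrix.of_apply,
      Matrix.diagonal_apply]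
    rw [Finset.sum_eq_single (τ i)]
    · by_cases h : i = j
      · subst h
        simp [← Complex.ofReal_mul, Real.mul_self_sqrt (ha0 (τ i))]
      · have h2 : ¬ (j = τ.symm (τ i)) := by simpa using fun hc => h hc.symm
        have h3 : ¬ (j = i) := fun hji => h hji.symm
        simp [h, h3]
    · intro k _ hk
      have : ¬ (i = τ.symm k) := fun hc => hk (by rw [hc]; simp)
      simp [this]
    · simp
  have hcancel : ∀ A : Matrix (Fin n) (Fin n) ℂ, star U * (U * A) = A := fun A => by
    rw [← mul_assoc, hsUU, one_mul]
  set Y : Matrix (Fin n) (Fin n) ℂ := U * Y₀ * star U with hYdef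
  have hYH : Yᴴ = U * Y₀ᴴ * star U := by
    rw [hYdef, ← Matrix.star_eq_conjTranspose, star_mul, star_mul, star_star,
      Matrix.star_eq_conjTranspose Y₀, mul_assoc]
  have hprod1 : Y * Yᴴ = U * Matrix.diagonal (fun i => ((a i : ℝ) : ℂ)) * star U := by
    rw [← hYY, hYdef, hYH]
    simp only [mul_assoc, hcancel]
  have hprod2 : Yᴴ * Y = U * Matrix.diagonal (fun i => ((a (τ i) : ℝ) : ℂ)) * star U := by
    rw [← hYY', hYdef, hYH]
    simp only [mul_assoc, hcancel]
  refine ⟨Y, ?_, ?_, ?_⟩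
  · rw [hprod1, hprod2]
    simp only [mul_assoc, hcancel]
    congr 1
    rw [← mul_assoc, ← mul_assoc, Matrix.diagonal_mul_diagonal, Matrix.diagonal_mul_diagonal]
    have hcomm : (fun i => ((a i : ℝ) : ℂ) * ((a (τ i) : ℝ) : ℂ))
        = fun i => ((a (τ i) : ℝ) : ℂ) * ((a i : ℝ) : ℂ) := funext fun i => mul_comm _ _
    rw [hcomm]
  · have hfun : (fun i => ((v i : ℝ) : ℂ))
        = fun i => ((a i : ℝ) : ℂ) - ((a (τ i) : ℝ) : ℂ) :=
      funext fun i => by rw [← Complex.ofReal_sub, hav i]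
    have hDeq : D = Matrix.diagonal fun i => ((a i : ℝ) : ℂ) - ((a (τ i) : ℝ) : ℂ) := by
      rw [hD, hfun]
    rw [hprod1, hprod2, hspec, ← Matrix.sub_mul, ← Matrix.mul_sub, Matrix.diagonal_sub, ← hDeq]
  · have h1 : ‖Yᴴ * Y‖ = ‖Y‖ * ‖Y‖ := Matrix.l2_opNorm_conjTranspose_mul_self Y
    rw [pow_two, ← h1, hprod2, CStarRing.norm_mul_mem_unitary _ hsUmem,
      CStarRing.norm_mem_unitary_mul _ hUmem]
    apply diag_norm_le _ _ (by linarith)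
    intro i
    rw [Complex.norm_real, Real.norm_eq_abs, abs_of_nonneg (ha0 (τ i))]
    exact ha2 (τ i)
end

section
/- Let 𝔄 be a C*-algebra and let A, B ∈ 𝔄 be normal elements (A A* = A* A and B B* = B* B) such that A B = 0. Then B A = 0, A B* = 0, and B* A = 0. -/
section CStarRing

variable {E : Type*} [NonUnitalNormedRing E] [StarRing E] [CStarRing E] {a b : E}

theorem star_mul_eq_zero_of_mul_eq_zero [IsStarNormal a] (h : a * b = 0) : star a * b = 0 := by
  rw [← CStarRing.star_mul_self_eq_zero_iff]
  calc star (star a * b) * (star a * b) = star b * (a * star a) * b := by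
        simp only [star_mul, star_star, mul_assoc]
    _ = star b * star a * (a * b) := by rw [← star_comm_self' a]; simp only [mul_assoc]
    _ = 0 := by rw [h, mul_zero]

theorem mul_star_eq_zero_of_mul_eq_zero [IsStarNormal b] (h : a * b = 0) : a * star b = 0 := by
  have h' : star b * star a = 0 := by rw [← star_mul, h, star_zero]
  simpa only [star_star, star_mul, star_zero] using
    congrArg star (star_mul_eq_zero_of_mul_eq_zero h')

end CStarRing

theorem normal_mul_eq_zero_orthogonal_general
    {𝔄 : Type*} [NonUnitalNormedRing 𝔄] [StarRing 𝔄] [CStarRing 𝔄]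
    (A B : 𝔄) (hA : A * star A = star A * A) (hB : B * star B = star B * B)
    (hAB : A * B = 0) :
    B * A = 0 ∧ A * star B = 0 ∧ star B * A = 0 := by
  have : IsStarNormal A := ⟨hA.symm⟩
  have : IsStarNormal B := ⟨hB.symm⟩
  have hBstarA : star B * A = 0 := by
    simpa only [star_mul, star_star, star_zero] using
      congrArg star (star_mul_eq_zero_of_mul_eq_zero hAB)
  have hBA : B * A = 0 := by
    simpa only [star_star] using star_mul_eq_zero_of_mul_eq_zero (a := star B) hBstarA
  exact ⟨hBA, mul_star_eq_zero_of_mul_eq_zero hAB, hBstarA⟩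

/-- In a C*-algebra, if `A` and `B` are normal and `A * B = 0`, then
`B * A = 0`, `A * star B = 0` and `star B * A = 0`. -/
theorem normal_mul_eq_zero_orthogonal
    {𝔄 : Type*} [NonUnitalNormedRing 𝔄] [StarRing 𝔄] [CStarRing 𝔄]
    [CompleteSpace 𝔄]
    (A B : 𝔄) (hA : A * star A = star A * A) (hB : B * star B = star B * B)
    (hAB : A * B = 0) :
    B * A = 0 ∧ A * star B = 0 ∧ star B * A = 0 :=
  normal_mul_eq_zero_orthogonal_general A B hA hB hAB
end

section
/- Let 𝔄 be a C*-algebra, let A ∈ 𝔄 be a normal element (A A* = A* A), and let B ∈ 𝔄 be such that A B = 0 and B A = 0. Then A B* = 0 and B* A = 0; in particular A and B are orthogonal, i.e. A B = B A = A B* = B* A = 0. -/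
namespace CStarRing

variable {E : Type*} [NonUnitalNormedRing E] [StarRing E] [CStarRing E]

theorem star_mul_eq_zero_of_mul_eq_zero {a b : E} [IsStarNormal a] (h : a * b = 0) :
    star a * b = 0 := by
  rw [← star_mul_self_eq_zero_iff]
  calc star (star a * b) * (star a * b) = star b * (a * star a) * b := by
        simp only [star_mul, star_star, mul_assoc]
    _ = star (a * b) * (a * b) := by
        rw [(star_comm_self' a).symm]; simp only [star_mul, mul_assoc]
    _ = 0 := by rw [h, mul_zero]

theorem mul_star_eq_zero_of_mul_eq_zero {a b : E} [IsStarNormal a] (h : b * a = 0) :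
    b * star a = 0 := by
  have h' : star a * star b = 0 := by rw [← star_mul, h, star_zero]
  have : a * star b = 0 := by simpa using star_mul_eq_zero_of_mul_eq_zero h'
  simpa using congrArg star this

end CStarRing

theorem normal_mul_eq_zero_mul_eq_zero_orthogonal_general
    {𝔄 : Type*} [NonUnitalNormedRing 𝔄] [StarRing 𝔄] [CStarRing 𝔄]
    (A B : 𝔄) (hA : A * star A = star A * A)
    (hAB : A * B = 0) (hBA : B * A = 0) :
    A * star B = 0 ∧ star B * A = 0 := by
  have : IsStarNormal A := ⟨hA.symm⟩
  constructor
  · simpa using congrArg star (CStarRing.mul_star_eq_zero_of_mul_eq_zero hBA)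
  · simpa using congrArg star (CStarRing.star_mul_eq_zero_of_mul_eq_zero hAB)

/-- In a C*-algebra, if `A` is normal, `A * B = 0` and `B * A = 0`, then
`A * star B = 0` and `star B * A = 0`; in particular `A` and `B` are orthogonal. -/
theorem normal_mul_eq_zero_mul_eq_zero_orthogonal
    {𝔄 : Type*} [NonUnitalNormedRing 𝔄] [StarRing 𝔄] [CStarRing 𝔄]
    [CompleteSpace 𝔄]
    (A B : 𝔄) (hA : A * star A = star A * A)
    (hAB : A * B = 0) (hBA : B * A = 0) :
    A * star B = 0 ∧ star B * A = 0 :=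
  normal_mul_eq_zero_mul_eq_zero_orthogonal_general A B hA hAB hBA
end
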